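/- arXiv:1910.04067 — 12 statements merged into one kernel-verified Lean document; each statement's English description precedes it below -/
import Mathlib

section
/- Let A, B, C be integers with 0 < B < A and 0 < C < A, let r = B/A, and let x be an integer with 0 ≤ x ≤ min(B,C). If inequality (9), namely C(A−C, B−x')/C(A,B) ≤ r^{x'}·(1−r)^{C−x'}, holds for every integer x' with max(0, B+C−A) ≤ x' ≤ x, then P(h ≤ x) ≤ P(B_a ≤ x), where h ~ Hypergeometric(A,B,C) with pmf P(h = x') = C(B,x')·C(A−B,C−x')/C(A,C), and B_a ~ Binomial(C, B/A). -/
lemma key_id (a b c d : ℕ) :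
    (((a+b).choose a : ℝ) * ((c+d).choose c)) / ((a+b+c+d).choose (a+c)) =
      (((a+c).choose a : ℝ) * ((b+d).choose b)) / ((a+b+c+d).choose (a+b)) := by
  have h1 : (((a+b).choose a : ℝ)) = (a+b).factorial / (a.factorial * b.factorial) := by
    rw [Nat.cast_choose ℝ (Nat.le_add_right a b)]; simp
  have h2 : (((c+d).choose c : ℝ)) = (c+d).factorial / (c.factorial * d.factorial) := by
    rw [Nat.cast_choose ℝ (Nat.le_add_right c d)]; simp
  have h3 : (((a+c).choose a : ℝ)) = (a+c).factorial / (a.factorial * c.factorial) := by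
    rw [Nat.cast_choose ℝ (Nat.le_add_right a c)]; simp
  have h4 : (((b+d).choose b : ℝ)) = (b+d).factorial / (b.factorial * d.factorial) := by
    rw [Nat.cast_choose ℝ (Nat.le_add_right b d)]; simp
  have h5 : (((a+b+c+d).choose (a+c) : ℝ)) = (a+b+c+d).factorial / ((a+c).factorial * (b+d).factorial) := by
    rw [Nat.cast_choose ℝ (by omega : a + c ≤ a+b+c+d), show a+b+c+d - (a+c) = b+d by omega]
  have h6 : (((a+b+c+d).choose (a+b) : ℝ)) = (a+b+c+d).factorial / ((a+b).factorial * (c+d).factorial) := by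
    rw [Nat.cast_choose ℝ (by omega : a + b ≤ a+b+c+d), show a+b+c+d - (a+b) = c+d by omega]
  have fp : ∀ n : ℕ, (0:ℝ) < n.factorial := fun n => by exact_mod_cast n.factorial_pos
  rw [h1, h2, h3, h4, h5, h6]
  field_simp

/-- If inequality (9) holds for every `x'` with `max(0, B+C−A) ≤ x' ≤ x`, then the
hypergeometric lower tail is dominated by the `Binomial(C, B/A)` lower tail:
`P(h ≤ x) ≤ P(B_a ≤ x)`. -/
theorem stmt_2 (A B C x : ℕ) (hB0 : 0 < B) (hBA : B < A) (hC0 : 0 < C) (hCA : C < A)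
    (hxB : x ≤ B) (hxC : x ≤ C)
    (h9 : ∀ x' : ℕ, B + C ≤ A + x' → x' ≤ x →
      ((A - C).choose (B - x') : ℝ) / (A.choose B : ℝ) ≤
        ((B : ℝ) / A) ^ x' * (1 - (B : ℝ) / A) ^ (C - x')) :
    ∑ x' ∈ Finset.range (x + 1),
        (B.choose x' : ℝ) * ((A - B).choose (C - x') : ℝ) / (A.choose C : ℝ) ≤
      ∑ x' ∈ Finset.range (x + 1),
        (C.choose x' : ℝ) * ((B : ℝ) / A) ^ x' * (1 - (B : ℝ) / A) ^ (C - x') := by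
  have hA0 : (0:ℝ) < A := by exact_mod_cast hB0.trans hBA
  have hr0 : (0:ℝ) ≤ (B:ℝ)/A := by positivity
  have hr1 : (0:ℝ) ≤ 1 - (B:ℝ)/A := by
    rw [sub_nonneg, div_le_one hA0]; exact_mod_cast hBA.le
  apply Finset.sum_le_sum
  intro i hi
  rw [Finset.mem_range] at hi
  have hix : i ≤ x := Nat.lt_succ_iff.mp hi
  by_cases hcase : B + C ≤ A + i
  · -- use the identity and (9)
    have hid : (B.choose i : ℝ) * ((A - B).choose (C - i) : ℝ) / (A.choose C : ℝ)
        = (C.choose i : ℝ) * (((A - C).choose (B - i) : ℝ) / (A.choose B : ℝ)) := by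
      have := key_id i (B - i) (C - i) (A + i - B - C)
      have e1 : i + (B - i) = B := by omega
      have e2 : (C - i) + (A + i - B - C) = A - B := by omega
      have e3 : i + (C - i) = C := by omega
      have e4 : (B - i) + (A + i - B - C) = A - C := by omega
      have e5 : B + (C - i) + (A + i - B - C) = A := by omega
      rw [e1, e2, e3, e4, e5] at this
      rw [mul_div_assoc] at this ⊢
      rw [this]; ring
    rw [hid]
    have h9i := h9 i hcase hix
    calc (C.choose i : ℝ) * (((A - C).choose (B - i) : ℝ) / (A.choose B : ℝ))
        ≤ (C.choose i : ℝ) * (((B:ℝ)/A) ^ i * (1 - (B:ℝ)/A) ^ (C - i)) := by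
          apply mul_le_mul_of_nonneg_left h9i (by positivity)
      _ = (C.choose i : ℝ) * ((B:ℝ)/A) ^ i * (1 - (B:ℝ)/A) ^ (C - i) := by ring
  · -- hypergeometric term is zero
    have hz : (A - B).choose (C - i) = 0 := Nat.choose_eq_zero_of_lt (by omega)
    rw [hz]
    simp only [Nat.cast_zero, mul_zero, zero_div]
    positivity
end

section
/- Let A, B, C be integers with 0 < B < A and 0 < C < A, let r = B/A, and let x be an integer with 0 ≤ x ≤ min(B,C). If inequality (10), namely C(C,x')/C(A,B) ≤ r^{B−x'}·(1−r)^{A−B−C+x'}, holds for every integer x' with max(0, B+C−A) ≤ x' ≤ x, then P(h ≤ x) ≤ P(B_b ≥ B−x), where h ~ Hypergeometric(A,B,C) with pmf P(h = x') = C(B,x')·C(A−B,C−x')/C(A,C), and B_b ~ Binomial(A−C, B/A). -/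
lemma key_split (n a b : ℕ) (h : a + b ≤ n) :
    n.choose a * (n - a).choose b = n.choose b * (n - b).choose a := by
  have h1 := Nat.choose_mul (n := n) (Nat.le_add_right a b)
  have h2 := Nat.choose_mul (n := n) (Nat.le_add_left b a)
  rw [Nat.add_sub_cancel_left] at h1
  rw [Nat.add_sub_cancel] at h2
  rw [← h1, ← h2, Nat.choose_symm_add]

lemma ident (A B C x' : ℕ) (hBA : B ≤ A) (hCA : C ≤ A) (hxB : x' ≤ B) (hxC : x' ≤ C)
    (h : B + C ≤ A + x') :
    A.choose C * (C.choose x' * (A - C).choose (B - x')) =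
      A.choose B * (B.choose x' * (A - B).choose (C - x')) := by
  have e1 := Nat.choose_mul (n := A) hxB
  have e2 := Nat.choose_mul (n := A) hxC
  have e3 := key_split (A - x') (C - x') (B - x') (by omega)
  have s1 : A - x' - (C - x') = A - C := by omega
  have s2 : A - x' - (B - x') = A - B := by omega
  rw [s1, s2] at e3
  calc A.choose C * (C.choose x' * (A - C).choose (B - x'))
      = (A.choose C * C.choose x') * (A - C).choose (B - x') := by ring
    _ = A.choose x' * ((A - x').choose (C - x') * (A - C).choose (B - x')) := by
        rw [e2]; ring
    _ = A.choose x' * ((A - x').choose (B - x') * (A - B).choose (C - x')) := by rw [e3]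
    _ = (A.choose B * B.choose x') * (A - B).choose (C - x') := by rw [e1]; ring
    _ = A.choose B * (B.choose x' * (A - B).choose (C - x')) := by ring

/-- If inequality (10) holds for every `x'` with `max(0, B+C−A) ≤ x' ≤ x`, then the
hypergeometric lower tail is dominated by the `Binomial(A−C, B/A)` upper tail:
`P(h ≤ x) ≤ P(B_b ≥ B − x)`. -/
theorem stmt_3 (A B C x : ℕ) (hB0 : 0 < B) (hBA : B < A) (hC0 : 0 < C) (hCA : C < A)
    (hxB : x ≤ B) (hxC : x ≤ C)
    (h10 : ∀ x' : ℕ, B + C ≤ A + x' → x' ≤ x →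
      (C.choose x' : ℝ) / (A.choose B : ℝ) ≤
        ((B : ℝ) / A) ^ (B - x') * (1 - (B : ℝ) / A) ^ (A + x' - B - C)) :
    ∑ x' ∈ Finset.range (x + 1),
        (B.choose x' : ℝ) * ((A - B).choose (C - x') : ℝ) / (A.choose C : ℝ) ≤
      ∑ j ∈ Finset.Icc (B - x) (A - C),
        ((A - C).choose j : ℝ) * ((B : ℝ) / A) ^ j * (1 - (B : ℝ) / A) ^ (A - C - j) := by
  have hA0 : (0:ℝ) < A := by exact_mod_cast (by omega : 0 < A)
  have hr0 : (0:ℝ) ≤ (B:ℝ)/A := by positivity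
  have hr1 : (0:ℝ) ≤ 1 - (B:ℝ)/A := by
    rw [sub_nonneg, div_le_one hA0]
    exact_mod_cast hBA.le
  set g : ℕ → ℝ := fun j => ((A - C).choose j : ℝ) * ((B : ℝ) / A) ^ j *
      (1 - (B : ℝ) / A) ^ (A - C - j) with hg
  have hgnn : ∀ j, 0 ≤ g j := fun j => by
    apply mul_nonneg (mul_nonneg (by positivity) (pow_nonneg hr0 _)) (pow_nonneg hr1 _)
  set S := (Finset.range (x + 1)).filter (fun x' => B + C ≤ A + x') with hS
  have hAC0 : (0:ℝ) < (A.choose C : ℝ) := by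
    exact_mod_cast Nat.choose_pos hCA.le
  have hAB0 : (0:ℝ) < (A.choose B : ℝ) := by
    exact_mod_cast Nat.choose_pos hBA.le
  -- step 1: restrict sum to S
  have step1 : ∑ x' ∈ Finset.range (x + 1),
      (B.choose x' : ℝ) * ((A - B).choose (C - x') : ℝ) / (A.choose C : ℝ)
      = ∑ x' ∈ S, (B.choose x' : ℝ) * ((A - B).choose (C - x') : ℝ) / (A.choose C : ℝ) := by
    refine (Finset.sum_subset (Finset.filter_subset _ _) ?_).symm
    intro x' hx' hns
    simp only [hS, Finset.mem_filter, Finset.mem_range] at hx' hns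
    have hlt : A + x' < B + C := by omega
    have : (A - B).choose (C - x') = 0 := Nat.choose_eq_zero_of_lt (by omega)
    rw [this]
    simp
  rw [step1]
  -- step 2: termwise bound
  have step2 : ∑ x' ∈ S, (B.choose x' : ℝ) * ((A - B).choose (C - x') : ℝ) / (A.choose C : ℝ)
      ≤ ∑ x' ∈ S, g (B - x') := by
    refine Finset.sum_le_sum ?_
    intro x' hx'
    simp only [hS, Finset.mem_filter, Finset.mem_range] at hx'
    obtain ⟨hx1, hx2⟩ := hx'
    have hx1' : x' ≤ x := by omega
    have hident := ident A B C x' hBA.le hCA.le (by omega) (by omega) hx2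
    have heq : (B.choose x' : ℝ) * ((A - B).choose (C - x') : ℝ) / (A.choose C : ℝ)
        = ((A - C).choose (B - x') : ℝ) * ((C.choose x' : ℝ) / (A.choose B : ℝ)) := by
      have hident' : ((A.choose C : ℝ)) * (C.choose x' * (A - C).choose (B - x'))
          = (A.choose B : ℝ) * (B.choose x' * (A - B).choose (C - x')) := by
        exact_mod_cast hident
      field_simp
      linear_combination (-1 : ℝ) * hident'
    rw [heq]
    have hexp : A + x' - B - C = A - C - (B - x') := by omega
    calc ((A - C).choose (B - x') : ℝ) * ((C.choose x' : ℝ) / (A.choose B : ℝ))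
        ≤ ((A - C).choose (B - x') : ℝ) *
            (((B : ℝ) / A) ^ (B - x') * (1 - (B : ℝ) / A) ^ (A + x' - B - C)) := by
          apply mul_le_mul_of_nonneg_left (h10 x' hx2 hx1') (by positivity)
      _ = g (B - x') := by rw [hg, hexp]; ring
  refine step2.trans ?_
  -- step 3: reindex and extend
  have hinj : ∀ a ∈ S, ∀ b ∈ S, B - a = B - b → a = b := by
    intro a ha b hb hab
    simp only [hS, Finset.mem_filter, Finset.mem_range] at ha hb
    omega
  rw [← Finset.sum_image hinj]
  refine Finset.sum_le_sum_of_subset_of_nonneg ?_ (fun j _ _ => hgnn j)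
  intro j hj
  simp only [Finset.mem_image, hS, Finset.mem_filter, Finset.mem_range] at hj
  obtain ⟨x', ⟨hx1, hx2⟩, rfl⟩ := hj
  simp only [Finset.mem_Icc]
  omega
end

section
/- Fix integers A, B, C₀, x with 0 < B < A, 0 < C₀ < A − B, 0 ≤ x ≤ min(B, C₀), and x ≤ B·C₀/A, and set r = B/A. If inequality (9), namely C(A−C, B−x)/C(A,B) ≤ r^x·(1−r)^{C−x}, holds for C = C₀, then it holds for every integer C with C₀ ≤ C < A − B. -/
set_option maxHeartbeats 1000000

lemma choose_pred_mul (m k : ℕ) :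
    (m + 1) * m.choose k = (m + 1).choose k * (m + 1 - k) := by
  rw [← Nat.choose_succ_right_eq, Nat.add_one_mul_choose_eq]

/-- Property 1 for inequality (9): for fixed `A`, `B`, `x` with `x ≤ B·C₀/A`, if
`C(A−C, B−x)/C(A,B) ≤ r^x (1−r)^(C−x)` holds at `C = C₀`, it holds for every `C`
with `C₀ ≤ C < A − B`. -/
theorem stmt_5 (A B C₀ x : ℕ) (hB0 : 0 < B) (hBA : B < A) (hC0 : 0 < C₀)
    (hC0A : C₀ < A - B) (hxB : x ≤ B) (hxC : x ≤ C₀) (hx : (x : ℝ) ≤ B * C₀ / A)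
    (h9 : ((A - C₀).choose (B - x) : ℝ) / (A.choose B : ℝ) ≤
      ((B : ℝ) / A) ^ x * (1 - (B : ℝ) / A) ^ (C₀ - x)) :
    ∀ C : ℕ, C₀ ≤ C → C < A - B →
      ((A - C).choose (B - x) : ℝ) / (A.choose B : ℝ) ≤
        ((B : ℝ) / A) ^ x * (1 - (B : ℝ) / A) ^ (C - x) := by
  intro C hC
  induction C, hC using Nat.le_induction with
  | base => intro _; exact h9
  | succ n hn ih =>
    intro hlt
    have hnlt : n < A - B := by omega
    have H := ih hnlt
    have hA0 : (0:ℝ) < A := by exact_mod_cast (hB0.trans hBA)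
    have hAc : (0:ℝ) < A.choose B := by exact_mod_cast Nat.choose_pos hBA.le
    have h1r : (0:ℝ) ≤ 1 - (B:ℝ)/A := by
      rw [sub_nonneg, div_le_one hA0]; exact_mod_cast hBA.le
    set m := A - (n+1) with hmdef
    set k := B - x with hkdef
    clear_value m k
    have hmn : A - n = m + 1 := by omega
    rw [hmn] at H
    have hk' : k ≤ m + 1 := by omega
    have hm1 : (m:ℝ) + 1 = (A:ℝ) - n := by
      have h : m + 1 + n = A := by omega
      have h2 := congrArg (Nat.cast : ℕ → ℝ) h
      push_cast at h2; linarith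
    have hkx : (k:ℝ) = (B:ℝ) - x := by
      have h : k + x = B := by omega
      have h2 := congrArg (Nat.cast : ℕ → ℝ) h
      push_cast at h2; linarith
    have hx' : (x:ℝ) * A ≤ (B:ℝ) * C₀ := by
      rw [le_div_iff₀ hA0] at hx; linarith
    have hCn : (B:ℝ) * C₀ ≤ (B:ℝ) * n := by
      have h : (C₀:ℝ) ≤ n := by exact_mod_cast hn
      have hB : (0:ℝ) ≤ B := by positivity
      nlinarith
    have hcore : (A:ℝ) * ((m:ℝ) + 1 - k) ≤ ((A:ℝ) - B) * ((m:ℝ) + 1) := by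
      rw [hm1, hkx]; nlinarith
    have hid : ((m:ℝ) + 1) * m.choose k = ((m+1).choose k : ℝ) * ((m:ℝ) + 1 - k) := by
      have h := choose_pred_mul m k
      have h2 := congrArg (Nat.cast : ℕ → ℝ) h
      push_cast [Nat.cast_sub hk'] at h2
      linarith
    have hc1 : (0:ℝ) ≤ ((m+1).choose k : ℝ) := by positivity
    have key : (m.choose k : ℝ) ≤ ((m+1).choose k : ℝ) * (1 - (B:ℝ)/A) := by
      have hm0 : (0:ℝ) < (m:ℝ) + 1 := by positivity
      have h1req : 1 - (B:ℝ)/A = ((A:ℝ) - B)/A := by field_simp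
      rw [h1req, mul_div_assoc', le_div_iff₀ hA0]
      have hidA : ((m:ℝ) + 1) * (m.choose k : ℝ) * A
          = ((m+1).choose k : ℝ) * ((m:ℝ) + 1 - k) * A := by rw [hid]
      have h3 : ((m:ℝ)+1) * ((m.choose k:ℝ) * A)
          ≤ ((m:ℝ)+1) * (((m+1).choose k:ℝ) * ((A:ℝ)-B)) := by
        nlinarith [mul_nonneg hc1 (sub_nonneg.mpr hcore), hidA]
      exact le_of_mul_le_mul_left h3 hm0
    have hnx : n + 1 - x = (n - x) + 1 := by omega
    rw [hnx, pow_succ, ← mul_assoc]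
    calc (m.choose k : ℝ) / A.choose B
        ≤ (((m+1).choose k : ℝ) / A.choose B) * (1 - (B:ℝ)/A) := by
          rw [div_mul_eq_mul_div]
          exact div_le_div_of_nonneg_right key hAc.le |>.trans_eq rfl
      _ ≤ ((B:ℝ)/A) ^ x * (1 - (B:ℝ)/A) ^ (n - x) * (1 - (B:ℝ)/A) :=
          mul_le_mul_of_nonneg_right H h1r
end

section
/- Fix integers A, B, C₀, x with 0 < B < A, 0 < C₀ < A − B, 0 ≤ x ≤ min(B, C₀), and x ≤ B·C₀/A, and set r = B/A. If inequality (10), namely C(C,x)/C(A,B) ≤ r^{B−x}·(1−r)^{A−B−C+x}, holds for C = C₀, then it holds for every integer C with C₀ ≤ C < A − B. -/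
/-- Property 1 for inequality (10): for fixed `A`, `B`, `x` with `x ≤ B·C₀/A`, if
`C(C,x)/C(A,B) ≤ r^(B−x) (1−r)^(A−B−C+x)` holds at `C = C₀`, it holds for every `C`
with `C₀ ≤ C < A − B`. -/
theorem stmt_6 (A B C₀ x : ℕ) (hB0 : 0 < B) (hBA : B < A) (hC0 : 0 < C₀)
    (hC0A : C₀ < A - B) (hxB : x ≤ B) (hxC : x ≤ C₀) (hx : (x : ℝ) ≤ B * C₀ / A)
    (h10 : (C₀.choose x : ℝ) / (A.choose B : ℝ) ≤
      ((B : ℝ) / A) ^ (B - x) * (1 - (B : ℝ) / A) ^ (A + x - B - C₀)) :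
    ∀ C : ℕ, C₀ ≤ C → C < A - B →
      (C.choose x : ℝ) / (A.choose B : ℝ) ≤
        ((B : ℝ) / A) ^ (B - x) * (1 - (B : ℝ) / A) ^ (A + x - B - C) := by
  have hA0 : (0:ℝ) < A := by exact_mod_cast hB0.trans hBA
  have hAB : (0:ℝ) < (A:ℝ) - B := by
    have : (B:ℝ) < A := by exact_mod_cast hBA
    linarith
  have hxA : (x:ℝ) * A ≤ B * C₀ := by
    rw [← le_div_iff₀ hA0] at *
    exact hx
  intro C hC1
  induction C, hC1 using Nat.le_induction with
  | base => intro _; exact h10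
  | succ C hC ih =>
    intro hlt
    have hIH := ih (by omega)
    -- exponent identity
    have hexp : A + x - B - C = (A + x - B - (C + 1)) + 1 := by omega
    rw [hexp, pow_succ, ← mul_assoc] at hIH
    have hxC1 : (0:ℝ) < (C:ℝ) + 1 - x := by
      have : x ≤ C := le_trans hxC hC
      have : (x:ℝ) ≤ C := by exact_mod_cast this
      linarith
    -- choose identity
    have hch : ((C+1).choose x : ℝ) = (C.choose x : ℝ) * ((C+1) / ((C:ℝ)+1-x)) := by
      have := Nat.choose_mul_succ_eq C x
      have hcast : (C.choose x : ℝ) * (C + 1) = ((C+1).choose x : ℝ) * ((C:ℝ)+1-x) := by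
        have hxle : x ≤ C + 1 := by omega
        push_cast [Nat.cast_sub hxle] at this ⊢
        exact_mod_cast congrArg (Nat.cast : ℕ → ℝ) this
      field_simp
      linarith [hcast]
    have hchA : (0:ℝ) < A.choose B := by
      exact_mod_cast Nat.choose_pos (le_of_lt hBA)
    have hr1 : (0:ℝ) ≤ ((B:ℝ)/A)^(B-x) * (1 - (B:ℝ)/A)^(A + x - B - (C+1)) := by
      have h1r : (0:ℝ) ≤ 1 - (B:ℝ)/A := by
        rw [sub_nonneg, div_le_one hA0]
        exact_mod_cast le_of_lt hBA
      positivity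
    have hfactor : (1 - (B:ℝ)/A) * (((C:ℝ)+1) / ((C:ℝ)+1-x)) ≤ 1 := by
      have h1r : 1 - (B:ℝ)/A = ((A:ℝ)-B)/A := by field_simp
      rw [h1r, div_mul_div_comm, div_le_one (by positivity)]
      have hCle : (C₀:ℝ) ≤ C := by exact_mod_cast hC
      have hB0' : (0:ℝ) ≤ B := by positivity
      nlinarith [hxA, mul_le_mul_of_nonneg_left hCle hB0']
    calc ((C+1).choose x : ℝ) / (A.choose B : ℝ)
        = (C.choose x : ℝ) / (A.choose B : ℝ) * (((C:ℝ)+1) / ((C:ℝ)+1-x)) := by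
          rw [hch]; ring
      _ ≤ ((B:ℝ)/A)^(B-x) * (1 - (B:ℝ)/A)^(A + x - B - (C+1)) * (1 - (B:ℝ)/A)
            * (((C:ℝ)+1) / ((C:ℝ)+1-x)) := by
          apply mul_le_mul_of_nonneg_right hIH
          positivity
      _ = ((B:ℝ)/A)^(B-x) * (1 - (B:ℝ)/A)^(A + x - B - (C+1))
            * ((1 - (B:ℝ)/A) * (((C:ℝ)+1) / ((C:ℝ)+1-x))) := by ring
      _ ≤ ((B:ℝ)/A)^(B-x) * (1 - (B:ℝ)/A)^(A + x - B - (C+1)) * 1 := by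
          exact mul_le_mul_of_nonneg_left hfactor hr1
      _ = ((B:ℝ)/A)^(B-x) * (1 - (B:ℝ)/A)^(A + x - B - (C+1)) := by ring
end

section
/- Fix integers A, B, C with 0 < B < A and 0 < C < A − B, and set r = B/A. Let k be an integer with 0 ≤ k ≤ min(B, C) and k ≤ B·C/A. If inequality (9), namely C(A−C, B−x)/C(A,B) ≤ r^x·(1−r)^{C−x}, holds for x = k, then it holds for every integer x with max(0, B+C−A) ≤ x ≤ k. -/
/-- Property 2 for inequality (9): for fixed `A`, `B`, `C`, if
`C(A−C, B−x)/C(A,B) ≤ r^x (1−r)^(C−x)` holds at `x = k ≤ B·C/A`, it holds for every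
`x` with `max(0, B+C−A) ≤ x ≤ k`. -/
theorem stmt_7 (A B C k : ℕ) (hB0 : 0 < B) (hBA : B < A) (hC0 : 0 < C)
    (hCA : C < A - B) (hkB : k ≤ B) (hkC : k ≤ C) (hk : (k : ℝ) ≤ B * C / A)
    (h9 : ((A - C).choose (B - k) : ℝ) / (A.choose B : ℝ) ≤
      ((B : ℝ) / A) ^ k * (1 - (B : ℝ) / A) ^ (C - k)) :
    ∀ x : ℕ, B + C ≤ A + x → x ≤ k →
      ((A - C).choose (B - x) : ℝ) / (A.choose B : ℝ) ≤
        ((B : ℝ) / A) ^ x * (1 - (B : ℝ) / A) ^ (C - x) := by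
  have hA0 : 0 < A := lt_trans hB0 hBA
  have hBCA : B + C < A := by omega
  have hA0R : (0:ℝ) < A := by exact_mod_cast hA0
  have hr0 : (0:ℝ) ≤ (B:ℝ)/A := by positivity
  have h1r0 : (0:ℝ) ≤ 1 - (B:ℝ)/A := by
    rw [sub_nonneg, div_le_one hA0R]
    exact_mod_cast hBA.le
  have hCAB : (0:ℝ) < (A.choose B : ℝ) := by
    exact_mod_cast Nat.choose_pos hBA.le
  have hABC : ∀ y : ℕ, (y:ℝ) ≤ k → (A:ℝ) * y ≤ B * C := by
    intro y hy
    have h1 : (A:ℝ) * k ≤ B * C := by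
      rw [le_div_iff₀ hA0R] at hk
      nlinarith [hk]
    nlinarith [hy]
  intro x _ hxk
  obtain ⟨d, hd⟩ : ∃ d, x + d = k := ⟨k - x, by omega⟩
  clear hxk
  induction d generalizing x with
  | zero =>
    have : x = k := by omega
    subst this; exact h9
  | succ d ih =>
    have hprev := ih (x+1) (by omega) (by omega)
    have hx1k : x + 1 ≤ k := by omega
    have hxB : x < B := by omega
    have hxC : x < C := by omega
    set s : ℕ := A - C - (B - (x+1)) with hs
    have key : (A - C).choose (B - x) * (B - x) = (A - C).choose (B - (x+1)) * s := by
      have h1 : B - x = (B - (x+1)) + 1 := by omega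
      rw [h1, Nat.choose_succ_right_eq]
    have keyR : ((A - C).choose (B - x) : ℝ) * ((B - x : ℕ) : ℝ)
        = ((A - C).choose (B - (x+1)) : ℝ) * ((s : ℕ) : ℝ) := by
      exact_mod_cast congrArg (Nat.cast : ℕ → ℝ) key
    have hBx0 : (0:ℝ) < ((B - x : ℕ) : ℝ) := by
      have : 0 < B - x := by omega
      exact_mod_cast this
    have hBxR : ((B - x : ℕ) : ℝ) = (B:ℝ) - x := by
      push_cast [Nat.cast_sub hxB.le]; ring
    have hsR : ((s : ℕ) : ℝ) = (A:ℝ) - C - B + x + 1 := by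
      have h2 : s + B = A - C + (x + 1) := by omega
      have h3 : (A - C) + C = A := by omega
      have h2R : ((s:ℕ):ℝ) + B = ((A - C : ℕ):ℝ) + (x+1) := by exact_mod_cast congrArg (Nat.cast : ℕ → ℝ) h2
      have h3R : ((A - C : ℕ):ℝ) + C = A := by exact_mod_cast congrArg (Nat.cast : ℕ → ℝ) h3
      linarith
    have hmain : ((B:ℝ)/A) * ((s:ℕ):ℝ) / ((B - x : ℕ):ℝ) ≤ 1 - (B:ℝ)/A := by
      rw [div_le_iff₀ hBx0]
      have hA : (A:ℝ) * (x+1) ≤ B * C := by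
        have := hABC (x+1) (by exact_mod_cast hx1k)
        push_cast at this
        linarith
      have hnum : (B:ℝ) * ((s:ℕ):ℝ) ≤ ((A:ℝ) - B) * ((B - x:ℕ):ℝ) := by
        rw [hsR, hBxR]
        nlinarith [hA, (by exact_mod_cast hBA : (B:ℝ) < A)]
      have h1r : (1 - (B:ℝ)/A) = ((A:ℝ) - B)/A := by field_simp
      rw [div_mul_eq_mul_div, h1r, div_mul_eq_mul_div]
      exact (div_le_div_iff_of_pos_right hA0R).mpr hnum
    calc ((A - C).choose (B - x) : ℝ) / (A.choose B : ℝ)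
        = (((A - C).choose (B - (x+1)) : ℝ) / (A.choose B : ℝ)) * (((s:ℕ):ℝ) / ((B - x:ℕ):ℝ)) := by
          field_simp
          linear_combination keyR
      _ ≤ (((B:ℝ)/A) ^ (x+1) * (1 - (B:ℝ)/A) ^ (C - (x+1))) * (((s:ℕ):ℝ) / ((B - x:ℕ):ℝ)) := by
          apply mul_le_mul_of_nonneg_right hprev
          positivity
      _ ≤ ((B:ℝ)/A) ^ x * (1 - (B:ℝ)/A) ^ (C - x) := by
          have hCx : C - x = (C - (x+1)) + 1 := by omega
          rw [hCx, pow_succ, pow_succ]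
          have h := mul_le_mul_of_nonneg_left hmain
            (mul_nonneg (pow_nonneg hr0 x) (pow_nonneg h1r0 (C - (x+1))))
          calc ((B:ℝ)/A) ^ x * ((B:ℝ)/A) * (1 - (B:ℝ)/A) ^ (C - (x+1)) * (((s:ℕ):ℝ) / ((B - x:ℕ):ℝ))
              = ((B:ℝ)/A) ^ x * (1 - (B:ℝ)/A) ^ (C - (x+1)) * (((B:ℝ)/A) * ((s:ℕ):ℝ) / ((B - x:ℕ):ℝ)) := by
                ring
            _ ≤ ((B:ℝ)/A) ^ x * (1 - (B:ℝ)/A) ^ (C - (x+1)) * (1 - (B:ℝ)/A) := h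
            _ = ((B:ℝ)/A) ^ x * ((1 - (B:ℝ)/A) ^ (C - (x+1)) * (1 - (B:ℝ)/A)) := by ring
end

section
/- Fix integers A, B, C with 0 < B < A and 0 < C < A − B, and set r = B/A. Let k be an integer with 0 ≤ k ≤ min(B, C) and k ≤ B·C/A. If inequality (10), namely C(C,x)/C(A,B) ≤ r^{B−x}·(1−r)^{A−B−C+x}, holds for x = k, then it holds for every integer x with max(0, B+C−A) ≤ x ≤ k. -/
/-- Property 2 for inequality (10): for fixed `A`, `B`, `C`, if
`C(C,x)/C(A,B) ≤ r^(B−x) (1−r)^(A−B−C+x)` holds at `x = k ≤ B·C/A`, it holds for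
every `x` with `max(0, B+C−A) ≤ x ≤ k`. -/
theorem stmt_8 (A B C k : ℕ) (hB0 : 0 < B) (hBA : B < A) (hC0 : 0 < C)
    (hCA : C < A - B) (hkB : k ≤ B) (hkC : k ≤ C) (hk : (k : ℝ) ≤ B * C / A)
    (h10 : (C.choose k : ℝ) / (A.choose B : ℝ) ≤
      ((B : ℝ) / A) ^ (B - k) * (1 - (B : ℝ) / A) ^ (A + k - B - C)) :
    ∀ x : ℕ, B + C ≤ A + x → x ≤ k →
      (C.choose x : ℝ) / (A.choose B : ℝ) ≤
        ((B : ℝ) / A) ^ (B - x) * (1 - (B : ℝ) / A) ^ (A + x - B - C) := by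
  have hA0 : 0 < A := lt_trans hB0 hBA
  have hA0' : (0:ℝ) < A := by exact_mod_cast hA0
  have hr0 : (0:ℝ) < (B:ℝ) / A := div_pos (by exact_mod_cast hB0) hA0'
  have hr1 : (B:ℝ) / A < 1 := (div_lt_one hA0').mpr (by exact_mod_cast hBA)
  have h1r : (0:ℝ) < 1 - (B:ℝ)/A := by linarith
  have hch : (0:ℝ) < (A.choose B : ℝ) := by exact_mod_cast Nat.choose_pos hBA.le
  have hkA : (k:ℝ) * A ≤ (B:ℝ) * C := by
    have := (le_div_iff₀ hA0').mp hk
    linarith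
  have step : ∀ x : ℕ, x + 1 ≤ k → B + C ≤ A + x →
      ((C.choose (x+1) : ℝ) / (A.choose B : ℝ) ≤
        ((B : ℝ) / A) ^ (B - (x+1)) * (1 - (B : ℝ) / A) ^ (A + (x+1) - B - C)) →
      ((C.choose x : ℝ) / (A.choose B : ℝ) ≤
        ((B : ℝ) / A) ^ (B - x) * (1 - (B : ℝ) / A) ^ (A + x - B - C)) := by
    intro x hxk hbc hsucc
    have hxC : x < C := lt_of_lt_of_le (Nat.lt_of_succ_le hxk) hkC
    have hCx : (0:ℝ) < (C:ℝ) - x := by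
      have : (x:ℝ) < C := by exact_mod_cast hxC
      linarith
    have hx1 : ((x:ℝ) + 1) ≤ k := by exact_mod_cast hxk
    -- ratio inequality : (x+1)(1-r) ≤ (C-x) r
    have hxA : ((x:ℝ) + 1) * A ≤ (B:ℝ) * C :=
      le_trans (mul_le_mul_of_nonneg_right hx1 hA0'.le) hkA
    have hratio : ((x:ℝ) + 1) * (1 - (B:ℝ)/A) ≤ ((C:ℝ) - x) * ((B:ℝ)/A) := by
      have e1 : (1:ℝ) - (B:ℝ)/A = ((A:ℝ) - B)/A := by field_simp
      rw [e1, ← mul_div_assoc, ← mul_div_assoc, div_le_div_iff₀ hA0' hA0']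
      nlinarith [hxA, hA0']
    -- choose recurrence
    have hcc : (C.choose x : ℝ) * ((C:ℝ) - x) = (C.choose (x+1) : ℝ) * ((x:ℝ) + 1) := by
      have h := congrArg (Nat.cast : ℕ → ℝ) (Nat.choose_succ_right_eq C x)
      push_cast [Nat.cast_sub hxC.le] at h
      linarith
    have e2 : B - x = (B - (x+1)) + 1 := by omega
    have e3 : A + (x+1) - B - C = (A + x - B - C) + 1 := by omega
    rw [div_le_iff₀ hch] at hsucc
    rw [e3, pow_succ] at hsucc
    have hRpos : (0:ℝ) ≤ ((B:ℝ)/A) ^ (B - (x+1)) *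
        ((1 - (B:ℝ)/A) ^ (A + x - B - C) * (1 - (B:ℝ)/A)) * (A.choose B : ℝ) :=
      mul_nonneg (mul_nonneg (pow_nonneg hr0.le _)
        (mul_nonneg (pow_nonneg h1r.le _) h1r.le)) hch.le
    have hLnn : (0:ℝ) ≤ ((x:ℝ) + 1) * (1 - (B:ℝ)/A) := by positivity
    have key : (C.choose x : ℝ) * (((C:ℝ) - x) * (1 - (B:ℝ)/A)) ≤
        (((B:ℝ)/A) ^ (B - (x+1)) * ((B:ℝ)/A) * (1 - (B:ℝ)/A) ^ (A + x - B - C) *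
          (A.choose B : ℝ)) * (((C:ℝ) - x) * (1 - (B:ℝ)/A)) := by
      calc (C.choose x : ℝ) * (((C:ℝ) - x) * (1 - (B:ℝ)/A))
          = (C.choose (x+1) : ℝ) * (((x:ℝ) + 1) * (1 - (B:ℝ)/A)) := by
            linear_combination (1 - (B:ℝ)/A) * hcc
        _ ≤ (((B:ℝ)/A) ^ (B - (x+1)) *
              ((1 - (B:ℝ)/A) ^ (A + x - B - C) * (1 - (B:ℝ)/A)) * (A.choose B : ℝ)) *
            (((C:ℝ) - x) * ((B:ℝ)/A)) :=
            mul_le_mul hsucc hratio hLnn hRpos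
        _ = _ := by ring
    have hfin : (C.choose x : ℝ) ≤
        ((B:ℝ)/A) ^ (B - (x+1)) * ((B:ℝ)/A) * (1 - (B:ℝ)/A) ^ (A + x - B - C) *
          (A.choose B : ℝ) :=
      le_of_mul_le_mul_right key (mul_pos hCx h1r)
    rw [div_le_iff₀ hch, e2, pow_succ]
    refine hfin.trans_eq ?_
    ring
  have main : ∀ d x : ℕ, x + d = k → B + C ≤ A + x →
      (C.choose x : ℝ) / (A.choose B : ℝ) ≤
        ((B : ℝ) / A) ^ (B - x) * (1 - (B : ℝ) / A) ^ (A + x - B - C) := by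
    intro d
    induction d with
    | zero =>
      intro x hx _
      obtain rfl : x = k := by omega
      exact h10
    | succ d ih =>
      intro x hx hbc
      exact step x (by omega) hbc (ih (x+1) (by omega) (by omega))
  intro x hbc hxk
  exact main (k - x) x (by omega) hbc
end

section
/- Fix integers B, C, x with x ≥ 5, x ≤ B, x ≤ C, and define Φ(A) = (C−1)·ln A + (C−x)·ln(A−B−1) − C·ln(A−1) − (C−x−1)·ln(A−B) + ln(A−C) − ln(A−B−C+x). Let A_low ≤ A_up be integers with Φ(A_up) ≥ 0, and suppose that every integer A with A_low ≤ A ≤ A_up satisfies: 2A ≥ 2B + C, A ≥ 3B + C, B + C − x < A − 1, (B−x)·C ≥ B·(2x+1), and, with g = x·A/(B·C), g < 3/2 and (3−2g)·A ≥ 3B + 2C + 3A/C. If inequality (9), namely C(A−C, B−x)/C(A,B) ≤ (B/A)^x·(1−B/A)^{C−x}, holds for A = A_up, then it holds for every integer A with A_low ≤ A ≤ A_up. -/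
private lemma lemK (b c xx a t : ℝ) (hx : 0 ≤ xx) (h1 : a ≤ t) (h2 : t ≤ a + 1)
    (hKa : 0 ≤ 3*b*c*a - 2*xx*a^2 - 3*b*a - 3*b^2*c - 2*b*c^2)
    (hKa1 : 0 ≤ 3*b*c*(a+1) - 2*xx*(a+1)^2 - 3*b*(a+1) - 3*b^2*c - 2*b*c^2) :
    0 ≤ 3*b*c*t - 2*xx*t^2 - 3*b*t - 3*b^2*c - 2*b*c^2 := by
  nlinarith [mul_nonneg (mul_nonneg hx (sub_nonneg.2 h1)) (sub_nonneg.2 h2),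
    mul_nonneg hKa (sub_nonneg.2 h2), mul_nonneg hKa1 (sub_nonneg.2 h1)]

private lemma lemP (b c xx t : ℝ) (h5x : 5 ≤ xx) (hxb : xx ≤ b) (hxc : xx ≤ c) (ht : 0 ≤ t)
    (hK : 0 ≤ 3*b*c*t - 2*xx*t^2 - 3*b*t - 3*b^2*c - 2*b*c^2) :
    (t*(t-1)*(t-b+c-xx-1) - (t-b)*(t-b-1)*(t+c-1)) * ((t-c)*(t-b-c+xx))
      ≤ (b-xx) * (t*(t-1)*((t-b)*(t-b-1))) := by
  have hb : (5:ℝ) ≤ b := le_trans h5x hxb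
  have hc : (5:ℝ) ≤ c := le_trans h5x hxc
  have h1 : 0 ≤ c*t*(3*b*c*t - 2*xx*t^2 - 3*b*t - 3*b^2*c - 2*b*c^2) :=
    mul_nonneg (mul_nonneg (by linarith) ht) hK
  have h2 : 0 ≤ xx*(1+xx)*t^3 := by positivity
  have h3 : 0 ≤ xx*((c+1)*(c+1-xx)-2)*t^2 := by
    have : (2:ℝ) ≤ (c+1)*(c+1-xx) := by nlinarith
    have := mul_nonneg (mul_nonneg (by linarith : (0:ℝ) ≤ xx) (by linarith : (0:ℝ) ≤ (c+1)*(c+1-xx)-2)) (sq_nonneg t)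
    nlinarith [this]
  have h4 : 0 ≤ (c*xx^2 + c^2*xx*(2*b-1) + b*c*(3*b+2-2*xx))*t := by
    have p1 : (0:ℝ) ≤ c*xx^2 := by positivity
    have p2 : (0:ℝ) ≤ c^2*xx*(2*b-1) :=
      mul_nonneg (mul_nonneg (sq_nonneg c) (by linarith)) (by linarith)
    have p3 : (0:ℝ) ≤ b*c*(3*b+2-2*xx) :=
      mul_nonneg (mul_nonneg (by linarith) (by linarith)) (by linarith)
    exact mul_nonneg (by linarith) ht
  have h5 : 0 ≤ b*c*((c-xx)*(c-1)+b*(xx-1)+b*c*(c-xx)+b^2*(c-1)) := by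
    have q1 : (0:ℝ) ≤ (c-xx)*(c-1) := mul_nonneg (by linarith) (by linarith)
    have q2 : (0:ℝ) ≤ b*(xx-1) := mul_nonneg (by linarith) (by linarith)
    have q3 : (0:ℝ) ≤ b*c*(c-xx) := mul_nonneg (mul_nonneg (by linarith) (by linarith)) (by linarith)
    have q4 : (0:ℝ) ≤ b^2*(c-1) := mul_nonneg (sq_nonneg b) (by linarith)
    have : (0:ℝ) ≤ b*c := mul_nonneg (by linarith) (by linarith)
    nlinarith [this]
  nlinarith [h1, h2, h3, h4, h5]

private lemma lemE (b c xx t : ℝ) (h5x : 5 ≤ xx) (hxb : xx ≤ b) (hxc : xx ≤ c)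
    (ht : 3*b + c ≤ t) (ht2 : b + c + 2 ≤ t + xx)
    (hK : 0 ≤ 3*b*c*t - 2*xx*t^2 - 3*b*t - 3*b^2*c - 2*b*c^2) :
    (c-1)/t + (c-xx)/(t-b-1) - c/(t-1) - (c-xx-1)/(t-b) + 1/(t-c) - 1/(t-b-c+xx) ≤ 0 := by
  have hb : (5:ℝ) ≤ b := le_trans h5x hxb
  have hc : (5:ℝ) ≤ c := le_trans h5x hxc
  have d1 : (0:ℝ) < t := by linarith
  have d2 : (0:ℝ) < t - 1 := by linarith
  have d3 : (0:ℝ) < t - b := by linarith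
  have d4 : (0:ℝ) < t - b - 1 := by linarith
  have d5 : (0:ℝ) < t - c := by linarith
  have d6 : (0:ℝ) < t - b - c + xx := by linarith
  have key := lemP b c xx t h5x hxb hxc d1.le hK
  have hprod : (0:ℝ) < t * (t-1) * (t-b) * (t-b-1) * (t-c) * (t-b-c+xx) := by positivity
  rw [← sub_nonpos] at key
  have hE : (c-1)/t + (c-xx)/(t-b-1) - c/(t-1) - (c-xx-1)/(t-b) + 1/(t-c) - 1/(t-b-c+xx)
      = ((t*(t-1)*(t-b+c-xx-1) - (t-b)*(t-b-1)*(t+c-1)) * ((t-c)*(t-b-c+xx))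
        - (b-xx) * (t*(t-1)*((t-b)*(t-b-1))))
        / (t * (t-1) * (t-b) * (t-b-1) * (t-c) * (t-b-c+xx)) := by
    field_simp
    ring
  rw [hE]
  exact div_nonpos_of_nonpos_of_nonneg key hprod.le

private lemma lemPhi (b c xx a : ℝ) (h5x : 5 ≤ xx) (hxb : xx ≤ b) (hxc : xx ≤ c)
    (ha : 3*b + c ≤ a)
    (hKa : 0 ≤ 3*b*c*a - 2*xx*a^2 - 3*b*a - 3*b^2*c - 2*b*c^2)
    (hKa1 : 0 ≤ 3*b*c*(a+1) - 2*xx*(a+1)^2 - 3*b*(a+1) - 3*b^2*c - 2*b*c^2) :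
    (c-1) * Real.log (a+1) + (c-xx) * Real.log ((a+1)-b-1) - c * Real.log ((a+1)-1)
      - (c-xx-1) * Real.log ((a+1)-b) + Real.log ((a+1)-c) - Real.log ((a+1)-b-c+xx)
    ≤ (c-1) * Real.log a + (c-xx) * Real.log (a-b-1) - c * Real.log (a-1)
      - (c-xx-1) * Real.log (a-b) + Real.log (a-c) - Real.log (a-b-c+xx) := by
  have hb : (5:ℝ) ≤ b := le_trans h5x hxb
  have hc : (5:ℝ) ≤ c := le_trans h5x hxc
  set f : ℝ → ℝ := fun t => (c-1) * Real.log t + (c-xx) * Real.log (t-b-1) - c * Real.log (t-1)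
      - (c-xx-1) * Real.log (t-b) + Real.log (t-c) - Real.log (t-b-c+xx) with hf
  have hderiv : ∀ t ∈ Set.Icc a (a+1), HasDerivAt f
      ((c-1)/t + (c-xx)/(t-b-1) - c/(t-1) - (c-xx-1)/(t-b) + 1/(t-c) - 1/(t-b-c+xx)) t := by
    intro t htI
    obtain ⟨h1t, h2t⟩ := htI
    have d1 : t ≠ 0 := by intro h; nlinarith
    have d2 : t - 1 ≠ 0 := by intro h; nlinarith
    have d3 : t - b ≠ 0 := by intro h; nlinarith
    have d4 : t - b - 1 ≠ 0 := by intro h; nlinarith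
    have d5 : t - c ≠ 0 := by intro h; nlinarith
    have d6 : t - b - c + xx ≠ 0 := by intro h; nlinarith
    have H1 : HasDerivAt (fun y : ℝ => Real.log y) (1/t) t := by
      simpa [one_div] using Real.hasDerivAt_log d1
    have H2 : HasDerivAt (fun y : ℝ => Real.log (y-b-1)) (1/(t-b-1)) t := by
      simpa using (((hasDerivAt_id t).sub_const b).sub_const 1).log d4
    have H3 : HasDerivAt (fun y : ℝ => Real.log (y-1)) (1/(t-1)) t := by
      simpa using ((hasDerivAt_id t).sub_const 1).log d2
    have H4 : HasDerivAt (fun y : ℝ => Real.log (y-b)) (1/(t-b)) t := by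
      simpa using ((hasDerivAt_id t).sub_const b).log d3
    have H5 : HasDerivAt (fun y : ℝ => Real.log (y-c)) (1/(t-c)) t := by
      simpa using ((hasDerivAt_id t).sub_const c).log d5
    have H6 : HasDerivAt (fun y : ℝ => Real.log (y-b-c+xx)) (1/(t-b-c+xx)) t := by
      simpa using ((((hasDerivAt_id t).sub_const b).sub_const c).add_const xx).log d6
    have H := ((((((H1.const_mul (c-1)).add (H2.const_mul (c-xx))).sub
      (H3.const_mul c)).sub (H4.const_mul (c-xx-1))).add H5).sub H6)
    exact H.congr_deriv (by ring)
  have hanti : AntitoneOn f (Set.Icc a (a+1)) := by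
    apply antitoneOn_of_deriv_nonpos (convex_Icc a (a+1))
    · intro t htI
      exact (hderiv t htI).continuousAt.continuousWithinAt
    · intro t htI
      rw [interior_Icc] at htI
      exact (hderiv t ⟨htI.1.le, htI.2.le⟩).differentiableAt.differentiableWithinAt
    · intro t htI
      rw [interior_Icc] at htI
      rw [(hderiv t ⟨htI.1.le, htI.2.le⟩).deriv]
      have hKt := lemK b c xx a t (by linarith) htI.1.le htI.2.le hKa hKa1
      exact lemE b c xx t h5x hxb hxc (by linarith [htI.1]) (by linarith [htI.1]) hKt
  exact hanti (Set.left_mem_Icc.2 (by linarith)) (Set.right_mem_Icc.2 (by linarith)) (by linarith)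

private lemma lemStep (B C x A : ℕ) (hx5 : 5 ≤ x) (hxB : x ≤ B) (hxC : x ≤ C)
    (hA1 : 3*B + C ≤ A) (hA2 : B + C + 2 ≤ A + x)
    (hΦ : 0 ≤ ((C:ℝ)-1) * Real.log ((A:ℝ)+1) + ((C:ℝ)-x) * Real.log ((A:ℝ)+1-B-1)
      - (C:ℝ) * Real.log ((A:ℝ)+1-1) - ((C:ℝ)-x-1) * Real.log ((A:ℝ)+1-B)
      + Real.log ((A:ℝ)+1-C) - Real.log ((A:ℝ)+1-B-C+x))
    (h9 : (((A+1-C).choose (B-x) : ℝ)) / (((A+1).choose B : ℝ)) ≤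
      ((B:ℝ)/(A+1))^x * (1-(B:ℝ)/(A+1))^(C-x)) :
    ((A-C).choose (B-x) : ℝ) / ((A.choose B : ℝ)) ≤
      ((B:ℝ)/A)^x * (1-(B:ℝ)/A)^(C-x) := by
  -- basic nat facts
  have hB5 : 5 ≤ B := le_trans hx5 hxB
  have hC5 : 5 ≤ C := le_trans hx5 hxC
  have hBA : B ≤ A := by omega
  have hCA : C ≤ A := by omega
  have hBA1 : B ≤ A + 1 := by omega
  have hBxAC : B - x ≤ A - C := by omega
  have hBxAC1 : B - x ≤ A + 1 - C := by omega
  -- real positivity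
  have rA : (0:ℝ) < A := by exact_mod_cast by omega
  have rB : (0:ℝ) < B := by exact_mod_cast by omega
  have rAB : (0:ℝ) < (A:ℝ) - B := by
    have : B < A := by omega
    have := (Nat.cast_lt (α := ℝ)).2 this; linarith
  have rA1B : (0:ℝ) < (A:ℝ) + 1 - B := by linarith
  have rA1C : (0:ℝ) < (A:ℝ) + 1 - C := by
    have : C < A + 1 := by omega
    have := (Nat.cast_lt (α := ℝ)).2 this; push_cast at this; linarith
  have rA1BCx : (0:ℝ) < (A:ℝ) + 1 - B - C + x := by
    have h := (Nat.cast_le (α := ℝ)).2 hA2; push_cast at h; linarith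
  -- choose positivity
  have cD : (0:ℝ) < (A.choose B : ℝ) := by exact_mod_cast Nat.choose_pos hBA
  have cD1 : (0:ℝ) < ((A+1).choose B : ℝ) := by exact_mod_cast Nat.choose_pos hBA1
  have cN1 : (0:ℝ) < ((A+1-C).choose (B-x) : ℝ) := by exact_mod_cast Nat.choose_pos hBxAC1
  have cN : (0:ℝ) ≤ ((A-C).choose (B-x) : ℝ) := by positivity
  -- cast identities
  have hD : (A.choose B : ℝ) * ((A:ℝ)+1) = ((A+1).choose B : ℝ) * ((A:ℝ)+1-B) := by
    have h := Nat.choose_mul_succ_eq A B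
    have h2 : ((A.choose B * (A+1) : ℕ) : ℝ) = (((A+1).choose B * (A+1-B) : ℕ) : ℝ) := by
      exact_mod_cast h
    push_cast [Nat.cast_sub hBA1] at h2
    linarith [h2]
  have hN : ((A-C).choose (B-x) : ℝ) * ((A:ℝ)+1-C) =
      ((A+1-C).choose (B-x) : ℝ) * ((A:ℝ)+1-B-C+x) := by
    have h := Nat.choose_mul_succ_eq (A-C) (B-x)
    have e1 : A - C + 1 = A + 1 - C := by omega
    have h2 : (((A-C).choose (B-x) * (A-C+1) : ℕ) : ℝ) =
        (((A-C+1).choose (B-x) * (A-C+1-(B-x)) : ℕ) : ℝ) := by exact_mod_cast h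
    rw [e1] at h2
    have e2 : ((A+1-C : ℕ) : ℝ) = (A:ℝ)+1-C := by
      have h1 : A+1-C + C = A+1 := by omega
      have := congrArg (Nat.cast : ℕ → ℝ) h1; push_cast at this; linarith
    have e3 : ((A+1-C-(B-x) : ℕ) : ℝ) = (A:ℝ)+1-B-C+x := by
      have h1 : A+1-C-(B-x) + (B + C) = A + 1 + x := by omega
      have := congrArg (Nat.cast : ℕ → ℝ) h1; push_cast at this; linarith
    rw [Nat.cast_mul, Nat.cast_mul, e2, e3] at h2
    linarith [h2]
  -- ratio
  set ρ : ℝ := (((A:ℝ)+1) * ((A:ℝ)+1-B-C+x)) / (((A:ℝ)+1-B) * ((A:ℝ)+1-C)) with hρ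
  have hρpos : 0 < ρ := by positivity
  have hLρ : ((A-C).choose (B-x) : ℝ) / ((A.choose B : ℝ)) =
      (((A+1-C).choose (B-x) : ℝ) / (((A+1).choose B : ℝ))) * ρ := by
    rw [hρ]
    field_simp
    linear_combination ((((A:ℕ)+1).choose B : ℝ) * ((A:ℝ)+1-B)) * hN -
      (((A+1-C).choose (B-x) : ℝ) * ((A:ℝ)+1-B-C+x)) * hD
  have step1 : ((A-C).choose (B-x) : ℝ) / ((A.choose B : ℝ)) ≤
      ((B:ℝ)/((A:ℝ)+1))^x * (1-(B:ℝ)/((A:ℝ)+1))^(C-x) * ρ := by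
    rw [hLρ]
    push_cast
    exact mul_le_mul_of_nonneg_right (by exact_mod_cast h9) hρpos.le
  refine le_trans step1 ?_
  -- rewrite 1 - B/(A+1) and 1 - B/A as quotients
  have rA1 : (0:ℝ) < (A:ℝ) + 1 := by linarith
  have e5 : (1 - (B:ℝ)/((A:ℝ)+1)) = ((A:ℝ)+1-B)/((A:ℝ)+1) := by field_simp
  have e6 : (1 - (B:ℝ)/(A:ℝ)) = ((A:ℝ)-B)/(A:ℝ) := by field_simp
  rw [e5, e6]
  have hpos1 : (0:ℝ) < ((B:ℝ)/((A:ℝ)+1))^x * (((A:ℝ)+1-B)/((A:ℝ)+1))^(C-x) * ρ := by positivity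
  have hpos2 : (0:ℝ) < ((B:ℝ)/(A:ℝ))^x * (((A:ℝ)-B)/(A:ℝ))^(C-x) := by positivity
  rw [← Real.log_le_log_iff hpos1 hpos2]
  have ecx : ((C - x : ℕ) : ℝ) = (C:ℝ) - x := Nat.cast_sub hxC
  have lpos1 : (0:ℝ) < ((B:ℝ)/((A:ℝ)+1))^x := by positivity
  have lpos2 : (0:ℝ) < (((A:ℝ)+1-B)/((A:ℝ)+1))^(C-x) := by positivity
  have lpos3 : (0:ℝ) < ((B:ℝ)/(A:ℝ))^x := by positivity
  have lpos4 : (0:ℝ) < (((A:ℝ)-B)/(A:ℝ))^(C-x) := by positivity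
  rw [Real.log_mul (by positivity) hρpos.ne', Real.log_mul lpos1.ne' lpos2.ne',
    Real.log_mul lpos3.ne' lpos4.ne', Real.log_pow, Real.log_pow, Real.log_pow, Real.log_pow,
    Real.log_div rB.ne' rA1.ne', Real.log_div rA1B.ne' rA1.ne',
    Real.log_div rB.ne' rA.ne', Real.log_div rAB.ne' rA.ne', hρ,
    Real.log_div (by positivity) (by positivity),
    Real.log_mul rA1.ne' rA1BCx.ne', Real.log_mul rA1B.ne' rA1C.ne', ecx]
  have eΦ1 : (A:ℝ)+1-1 = (A:ℝ) := by ring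
  have eΦ2 : (A:ℝ)+1-B-1 = (A:ℝ)-B := by ring
  rw [eΦ1, eΦ2] at hΦ
  linarith [hΦ]

/-- Property 3, first part: backward induction on the population size `A` for
inequality (9), controlled by the sign of
`Φ(A) = (C−1)ln A + (C−x)ln(A−B−1) − C ln(A−1) − (C−x−1)ln(A−B) + ln(A−C) − ln(A−B−C+x)`. -/
theorem stmt_9 (B C x : ℕ) (hx5 : 5 ≤ x) (hxB : x ≤ B) (hxC : x ≤ C)
    (Alow Aup : ℕ) (hA : Alow ≤ Aup)
    (hΦ : 0 ≤ ((C : ℝ) - 1) * Real.log Aup + ((C : ℝ) - x) * Real.log ((Aup : ℝ) - B - 1)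
      - (C : ℝ) * Real.log ((Aup : ℝ) - 1) - ((C : ℝ) - x - 1) * Real.log ((Aup : ℝ) - B)
      + Real.log ((Aup : ℝ) - C) - Real.log ((Aup : ℝ) - B - C + x))
    (hcond : ∀ A : ℕ, Alow ≤ A → A ≤ Aup →
      2 * A ≥ 2 * B + C ∧ A ≥ 3 * B + C ∧ B + C + 2 ≤ A + x ∧
      (B - x) * C ≥ B * (2 * x + 1) ∧
      ((x : ℝ) * A / (B * C) < 3 / 2) ∧
      (3 - 2 * ((x : ℝ) * A / (B * C))) * A ≥ 3 * B + 2 * C + 3 * A / C)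
    (h9 : ((Aup - C).choose (B - x) : ℝ) / (Aup.choose B : ℝ) ≤
      ((B : ℝ) / Aup) ^ x * (1 - (B : ℝ) / Aup) ^ (C - x)) :
    ∀ A : ℕ, Alow ≤ A → A ≤ Aup →
      ((A - C).choose (B - x) : ℝ) / (A.choose B : ℝ) ≤
        ((B : ℝ) / A) ^ x * (1 - (B : ℝ) / A) ^ (C - x) := by
  have rB : (0:ℝ) < B := by exact_mod_cast show 0 < B by omega
  have rC : (0:ℝ) < C := by exact_mod_cast show 0 < C by omega
  -- derive the polynomial form of the last condition
  have hKfact : ∀ A : ℕ, Alow ≤ A → A ≤ Aup →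
      0 ≤ 3*(B:ℝ)*C*A - 2*x*(A:ℝ)^2 - 3*B*A - 3*(B:ℝ)^2*C - 2*B*(C:ℝ)^2 := by
    intro A h1 h2
    have h := (hcond A h1 h2).2.2.2.2.2
    rw [ge_iff_le] at h
    have h' := mul_le_mul_of_nonneg_left h (le_of_lt (mul_pos rB rC))
    have e1 : (B:ℝ)*C*((3 - 2*((x:ℝ)*A/((B:ℝ)*C)))*A) = 3*B*C*A - 2*x*(A:ℝ)^2 := by
      field_simp
    have e2 : (B:ℝ)*C*(3*(B:ℝ) + 2*C + 3*A/C) = 3*(B:ℝ)^2*C + 2*B*(C:ℝ)^2 + 3*B*A := by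
      field_simp
    rw [e1, e2] at h'
    linarith
  have key : ∀ d : ℕ, ∀ A : ℕ, A + d = Aup → Alow ≤ A →
      (((A - C).choose (B - x) : ℝ) / (A.choose B : ℝ) ≤
        ((B : ℝ) / A) ^ x * (1 - (B : ℝ) / A) ^ (C - x)) ∧
      0 ≤ ((C : ℝ) - 1) * Real.log A + ((C : ℝ) - x) * Real.log ((A : ℝ) - B - 1)
        - (C : ℝ) * Real.log ((A : ℝ) - 1) - ((C : ℝ) - x - 1) * Real.log ((A : ℝ) - B)
        + Real.log ((A : ℝ) - C) - Real.log ((A : ℝ) - B - C + x) := by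
    intro d
    induction d with
    | zero =>
      intro A h1 h2
      have : A = Aup := by omega
      subst this
      exact ⟨h9, hΦ⟩
    | succ d ih =>
      intro A h1 h2
      obtain ⟨ih9, ihΦ⟩ := ih (A+1) (by omega) (by omega)
      have hcA := hcond A h2 (by omega)
      have h3BC : 3*B + C ≤ A := hcA.2.1
      have hBC2 : B + C + 2 ≤ A + x := hcA.2.2.1
      have KA := hKfact A h2 (by omega)
      have KA1 := hKfact (A+1) (by omega) (by omega)
      push_cast at KA1 ihΦ ih9
      constructor
      · exact lemStep B C x A hx5 hxB hxC h3BC hBC2 ihΦ ih9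
      · have h5x : (5:ℝ) ≤ (x:ℝ) := by exact_mod_cast hx5
        have hxb : (x:ℝ) ≤ B := by exact_mod_cast hxB
        have hxc : (x:ℝ) ≤ C := by exact_mod_cast hxC
        have ha : 3*(B:ℝ) + C ≤ A := by exact_mod_cast h3BC
        have := lemPhi (B:ℝ) (C:ℝ) (x:ℝ) (A:ℝ) h5x hxb hxc ha KA KA1
        linarith [this, ihΦ]
  intro A h1 h2
  exact (key (Aup - A) A (by omega) h1).1
end

section
/- Fix integers A, C, x with x ≥ 5 and x ≤ C, and define G(B) = (x−1)·ln(B+1) + (C−x)·ln(A−B−1) − x·ln B − (C−x−1)·ln(A−B) + ln(1+B−x) − ln(A−B−C+x). Let B_low ≤ B_up be integers with G(B_low) ≥ 0, and suppose that every integer B with B_low ≤ B ≤ B_up satisfies: x ≤ B, B + C − x < A − 1, (B−x)·C ≥ B·(2x+1), and A ≥ 3B + C. If inequality (9), namely C(A−C, B−x)/C(A,B) ≤ (B/A)^x·(1−B/A)^{C−x}, holds for B = B_low, then it holds for every integer B with B_low ≤ B ≤ B_up. -/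
noncomputable def Gr (A C x : ℕ) (b : ℝ) : ℝ :=
  ((x : ℝ) - 1) * Real.log (b + 1) + ((C : ℝ) - x) * Real.log ((A : ℝ) - b - 1)
    - (x : ℝ) * Real.log b - ((C : ℝ) - x - 1) * Real.log ((A : ℝ) - b)
    + Real.log (1 + b - x) - Real.log ((A : ℝ) - b - C + x)

lemma gdiff_mono (m m' : ℝ) (hm : 0 < m) (hmm : m ≤ m') :
    2 * Real.log (m' + 1) - Real.log m' - Real.log (m' + 2) ≤
    2 * Real.log (m + 1) - Real.log m - Real.log (m + 2) := by
  have hm' : 0 < m' := lt_of_lt_of_le hm hmm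
  have e : ∀ u : ℝ, 0 < u →
      2 * Real.log (u + 1) - Real.log u - Real.log (u + 2)
        = Real.log ((u + 1) ^ 2 / (u * (u + 2))) := by
    intro u hu
    rw [Real.log_div (by positivity) (by positivity), Real.log_mul (by positivity) (by positivity),
      Real.log_pow]
    push_cast; ring
  rw [e m hm, e m' hm']
  apply Real.log_le_log (by positivity)
  rw [div_le_div_iff₀ (by positivity) (by positivity)]
  nlinarith [mul_pos hm hm', sub_nonneg.2 hmm]

lemma trio (k : ℕ) (n : ℝ) (hk : (k : ℝ) ≤ n) :
    0 ≤ ((k : ℝ) - 1) * (Real.log (n + 2) - Real.log (n + 1))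
      - k * (Real.log (n + 1) - Real.log n)
      + (Real.log (n - k + 2) - Real.log (n - k + 1)) := by
  induction k with
  | zero => push_cast; ring_nf; exact le_rfl
  | succ k ih =>
      have hk' : (k : ℝ) ≤ n := by push_cast at hk ⊢; linarith
      have ih' := ih hk'
      have hpos : (0 : ℝ) < n - k := by push_cast at hk; linarith
      have hd := gdiff_mono (n - k) n hpos (by linarith [Nat.cast_nonneg (α := ℝ) k])
      push_cast
      push_cast at ih' hd
      have e1 : n - (k + 1 : ℝ) + 2 = n - k + 1 := by ring
      have e2 : n - (k + 1 : ℝ) + 1 = n - k := by ring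
      rw [e1, e2]
      nlinarith [ih', hd]

lemma Gmono (A C x B : ℕ) (hx : x ≤ B) (hxC : x ≤ C) (hA1 : B + C + 2 ≤ A + x) :
    Gr A C x B ≤ Gr A C x ((B : ℝ) + 1) := by
  have t1 := trio x (B : ℝ) (by exact_mod_cast hx)
  have hcast : ((C - x : ℕ) : ℝ) = (C : ℝ) - x := by
    push_cast [hxC]; ring
  have hA1' : ((C - x : ℕ) : ℝ) ≤ (A : ℝ) - B - 2 := by
    rw [hcast]
    have : (B : ℝ) + C + 2 ≤ (A : ℝ) + x := by exact_mod_cast hA1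
    linarith
  have t2 := trio (C - x) ((A : ℝ) - B - 2) hA1'
  rw [hcast] at t2
  simp only [Gr]
  ring_nf at t1 t2 ⊢
  linarith

lemma form9 (A C x Bn K : ℕ) (hA : 0 < A) (hxC : x ≤ C) (hBA : Bn ≤ A) :
    ((K : ℝ) / (A.choose Bn : ℝ) ≤ ((Bn : ℝ) / A) ^ x * (1 - (Bn : ℝ) / A) ^ (C - x)) ↔
    ((K : ℝ) * (A : ℝ) ^ C ≤ (Bn : ℝ) ^ x * ((A : ℝ) - Bn) ^ (C - x) * (A.choose Bn : ℝ)) := by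
  have hch : (0 : ℝ) < (A.choose Bn : ℝ) := by exact_mod_cast Nat.choose_pos hBA
  have ha : (0 : ℝ) < (A : ℝ) := by exact_mod_cast hA
  have key : ((Bn : ℝ) / A) ^ x * (1 - (Bn : ℝ) / A) ^ (C - x)
      = ((Bn : ℝ) ^ x * ((A : ℝ) - Bn) ^ (C - x)) / (A : ℝ) ^ C := by
    have h1 : (1 - (Bn : ℝ) / A) = ((A : ℝ) - Bn) / A := by field_simp
    rw [h1, div_pow, div_pow, div_mul_div_comm, ← pow_add, Nat.add_sub_cancel' hxC]
  rw [key, div_le_div_iff₀ hch (by positivity)]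

lemma stepP (A C x B : ℕ) (hx5 : 5 ≤ x) (hx : x ≤ B) (hxC : x ≤ C)
    (hA1 : B + C + 2 ≤ A + x) (hA2 : 3 * B + C ≤ A)
    (hQ : 0 ≤ Gr A C x B)
    (hP : ((A - C).choose (B - x) : ℝ) / (A.choose B : ℝ) ≤
      ((B : ℝ) / A) ^ x * (1 - (B : ℝ) / A) ^ (C - x)) :
    ((A - C).choose (B + 1 - x) : ℝ) / (A.choose (B + 1) : ℝ) ≤
      (((B + 1 : ℕ) : ℝ) / A) ^ x * (1 - ((B + 1 : ℕ) : ℝ) / A) ^ (C - x) := by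
  have hA : 0 < A := by omega
  have hBA : B ≤ A := by omega
  have hB1A : B + 1 ≤ A := by omega
  have ha : (0 : ℝ) < (A : ℝ) := by exact_mod_cast hA
  have cb : (5 : ℝ) ≤ (B : ℝ) := by exact_mod_cast le_trans hx5 hx
  have cxB : (x : ℝ) ≤ (B : ℝ) := by exact_mod_cast hx
  have cxC : (x : ℝ) ≤ (C : ℝ) := by exact_mod_cast hxC
  have c1 : (B : ℝ) + C + 2 ≤ (A : ℝ) + x := by exact_mod_cast hA1
  have c2 : 3 * (B : ℝ) + C ≤ (A : ℝ) := by exact_mod_cast hA2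
  have cx5 : (5 : ℝ) ≤ (x : ℝ) := by exact_mod_cast hx5
  set a : ℝ := (A : ℝ)
  set b : ℝ := (B : ℝ)
  have hb : (0 : ℝ) < b := by linarith
  have hab : (0 : ℝ) < a - b := by linarith
  have hab1 : (0 : ℝ) < a - b - 1 := by linarith
  have hbx : (0 : ℝ) < 1 + b - x := by linarith
  have habc : (0 : ℝ) < a - b - C + x := by linarith
  have hccast : ((C - x : ℕ) : ℝ) = (C : ℝ) - (x : ℝ) := by push_cast [hxC]; ring
  have Hprod : b ^ x * (a - b) ^ (C - x) * ((a - b - C + x) * (b + 1)) ≤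
      (b + 1) ^ x * (a - b - 1) ^ (C - x) * ((1 + b - x) * (a - b)) := by
    have hL : (0:ℝ) < b ^ x * (a - b) ^ (C - x) * ((a - b - C + x) * (b + 1)) := by positivity
    have hR : (0:ℝ) < (b + 1) ^ x * (a - b - 1) ^ (C - x) * ((1 + b - x) * (a - b)) := by
      positivity
    rw [← Real.log_le_log_iff hL hR]
    rw [Real.log_mul (by positivity) (by positivity), Real.log_mul (by positivity) (by positivity),
      Real.log_mul (by positivity) (by positivity), Real.log_mul (by positivity) (by positivity),
      Real.log_mul (by positivity) (by positivity), Real.log_mul (by positivity) (by positivity),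
      Real.log_pow, Real.log_pow, Real.log_pow, Real.log_pow, hccast]
    have hQ' := hQ
    simp only [Gr] at hQ'
    linarith
  have hrec1 : (A.choose (B + 1) : ℝ) * (b + 1) = (A.choose B : ℝ) * (a - b) := by
    have h := Nat.choose_succ_right_eq A B
    have h' := congrArg (Nat.cast : ℕ → ℝ) h
    push_cast [Nat.cast_sub hBA] at h'
    linarith [h']
  have hBxAC : B - x ≤ A - C := by omega
  have hrec2 : ((A - C).choose (B + 1 - x) : ℝ) * (1 + b - x) =
      ((A - C).choose (B - x) : ℝ) * (a - C - b + x) := by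
    have e : B + 1 - x = (B - x) + 1 := by omega
    rw [e]
    have h := Nat.choose_succ_right_eq (A - C) (B - x)
    have h' := congrArg (Nat.cast : ℕ → ℝ) h
    push_cast [Nat.cast_sub hBxAC, Nat.cast_sub hx, Nat.cast_sub (show C ≤ A by omega)] at h'
    linarith [h']
  rw [form9 A C x B _ hA hxC hBA] at hP
  rw [form9 A C x (B + 1) _ hA hxC hB1A]
  push_cast
  set K0 : ℝ := ((A - C).choose (B - x) : ℝ)
  set K1 : ℝ := ((A - C).choose (B + 1 - x) : ℝ)
  set ch0 : ℝ := (A.choose B : ℝ)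
  set ch1 : ℝ := (A.choose (B + 1) : ℝ)
  have hK0 : (0:ℝ) ≤ K0 := Nat.cast_nonneg _
  have hch0 : (0:ℝ) ≤ ch0 := Nat.cast_nonneg _
  have hmulpos : (0:ℝ) < (1 + b - x) * (b + 1) := by positivity
  have hfinal : K1 * a ^ C * ((1 + b - x) * (b + 1)) ≤
      (b + 1) ^ x * (a - b - 1) ^ (C - x) * ch1 * ((1 + b - x) * (b + 1)) := by
    calc K1 * a ^ C * ((1 + b - x) * (b + 1))
        = (K1 * (1 + b - x)) * (b + 1) * a ^ C := by ring
      _ = (K0 * (a - C - b + x)) * (b + 1) * a ^ C := by rw [hrec2]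
      _ = (K0 * a ^ C) * ((a - C - b + x) * (b + 1)) := by ring
      _ ≤ (b ^ x * (a - b) ^ (C - x) * ch0) * ((a - C - b + x) * (b + 1)) := by
          apply mul_le_mul_of_nonneg_right hP
          nlinarith
      _ = (b ^ x * (a - b) ^ (C - x) * ((a - b - C + x) * (b + 1))) * ch0 := by ring
      _ ≤ ((b + 1) ^ x * (a - b - 1) ^ (C - x) * ((1 + b - x) * (a - b))) * ch0 :=
          mul_le_mul_of_nonneg_right Hprod hch0
      _ = (b + 1) ^ x * (a - b - 1) ^ (C - x) * (1 + b - x) * (ch0 * (a - b)) := by ring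
      _ = (b + 1) ^ x * (a - b - 1) ^ (C - x) * (1 + b - x) * (ch1 * (b + 1)) := by rw [hrec1]
      _ = (b + 1) ^ x * (a - b - 1) ^ (C - x) * ch1 * ((1 + b - x) * (b + 1)) := by ring
  have hres : K1 * a ^ C ≤ (b + 1) ^ x * (a - b - 1) ^ (C - x) * ch1 :=
    le_of_mul_le_mul_right hfinal hmulpos
  convert hres using 2 <;> push_cast <;> ring

/-- Property 3, second part: induction on the number of marked items `B` for
inequality (9), controlled by the sign of
`G(B) = (x−1)ln(B+1) + (C−x)ln(A−B−1) − x ln B − (C−x−1)ln(A−B) + ln(1+B−x) − ln(A−B−C+x)`. -/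
theorem stmt_10 (A C x : ℕ) (hx5 : 5 ≤ x) (hxC : x ≤ C)
    (Blow Bup : ℕ) (hB : Blow ≤ Bup)
    (hG : 0 ≤ ((x : ℝ) - 1) * Real.log ((Blow : ℝ) + 1)
      + ((C : ℝ) - x) * Real.log ((A : ℝ) - Blow - 1) - (x : ℝ) * Real.log Blow
      - ((C : ℝ) - x - 1) * Real.log ((A : ℝ) - Blow)
      + Real.log (1 + (Blow : ℝ) - x) - Real.log ((A : ℝ) - Blow - C + x))
    (hcond : ∀ B : ℕ, Blow ≤ B → B ≤ Bup →
      x ≤ B ∧ B + C + 2 ≤ A + x ∧ (B - x) * C ≥ B * (2 * x + 1) ∧ A ≥ 3 * B + C)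
    (h9 : ((A - C).choose (Blow - x) : ℝ) / (A.choose Blow : ℝ) ≤
      ((Blow : ℝ) / A) ^ x * (1 - (Blow : ℝ) / A) ^ (C - x)) :
    ∀ B : ℕ, Blow ≤ B → B ≤ Bup →
      ((A - C).choose (B - x) : ℝ) / (A.choose B : ℝ) ≤
        ((B : ℝ) / A) ^ x * (1 - (B : ℝ) / A) ^ (C - x) := by
  have main : ∀ d : ℕ, Blow + d ≤ Bup →
      (((A - C).choose (Blow + d - x) : ℝ) / (A.choose (Blow + d) : ℝ) ≤
        (((Blow + d : ℕ) : ℝ) / A) ^ x * (1 - ((Blow + d : ℕ) : ℝ) / A) ^ (C - x))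
      ∧ 0 ≤ Gr A C x ((Blow + d : ℕ) : ℝ) := by
    intro d
    induction d with
    | zero =>
        intro _
        constructor
        · simpa using h9
        · simp only [Nat.add_zero, Gr]
          exact hG
    | succ d ih =>
        intro hle
        have hle' : Blow + d ≤ Bup := by omega
        obtain ⟨hP, hQ⟩ := ih hle'
        obtain ⟨hc1, hc2, _, hc4⟩ := hcond (Blow + d) (by omega) hle'
        have hstep := stepP A C x (Blow + d) hx5 hc1 hxC hc2 hc4 hQ hP
        have e : Blow + (d + 1) = (Blow + d) + 1 := by omega
        constructor
        · rw [e]; exact hstep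
        · have hmono := Gmono A C x (Blow + d) hc1 hxC hc2
          have ecast : (((Blow + d) + 1 : ℕ) : ℝ) = ((Blow + d : ℕ) : ℝ) + 1 := by push_cast; ring
          rw [e, ecast]
          exact le_trans hQ hmono
  intro B hB1 hB2
  have h := (main (B - Blow) (by omega)).1
  rwa [Nat.add_sub_cancel' hB1] at h
end

section
/- Let A, B, C, x be real numbers with 0 < x ≤ min(B, C), B + C − x < A − 1, B + 1 < A, 2A ≥ 2B + C, A ≥ 3B + C, (B−x)·C ≥ B·(2x+1), and, writing g = x·A/(B·C), g < 3/2 and (3−2g)·A ≥ 3B + 2C + 3A/C. Then Φ'(A) := −C/(A−1) + (C−1)/A + 1/(A−C) − (C−x−1)/(A−B) + (C−x)/(A−B−1) − 1/(A−B−C+x) ≤ 0. -/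
set_option maxHeartbeats 2000000 in

/-- The derivative in `A` of `Φ(A) = (C−1)ln A + (C−x)ln(A−B−1) − C ln(A−1)
− (C−x−1)ln(A−B) + ln(A−C) − ln(A−B−C+x)` is nonpositive under the listed conditions. -/
theorem stmt_11 (A B C x : ℝ) (hx0 : 0 < x) (hxB : x ≤ B) (hxC : x ≤ C)
    (h1 : B + C - x < A - 1) (h2 : B + 1 < A) (h3 : 2 * A ≥ 2 * B + C)
    (h4 : A ≥ 3 * B + C) (h5 : (B - x) * C ≥ B * (2 * x + 1))
    (h6 : x * A / (B * C) < 3 / 2)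
    (h7 : (3 - 2 * (x * A / (B * C))) * A ≥ 3 * B + 2 * C + 3 * A / C) :
    -C / (A - 1) + (C - 1) / A + 1 / (A - C) - (C - x - 1) / (A - B)
      + (C - x) / (A - B - 1) - 1 / (A - B - C + x) ≤ 0 := by
  have hB : 0 < B := lt_of_lt_of_le hx0 hxB
  have hC : 0 < C := lt_of_lt_of_le hx0 hxC
  have hC1 : 1 ≤ C := by nlinarith
  have hA1 : 0 < A - 1 := by linarith
  have hA : 0 < A := by linarith
  have hAB1 : 0 < A - B - 1 := by linarith
  have hAB : 0 < A - B := by linarith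
  have hAC1 : 0 ≤ A - C - 1 := by linarith
  have hAC : 0 < A - C := by linarith
  have hABC : 0 < A - B - C + x := by linarith
  -- polynomial form of h7
  have h7' : 0 ≤ 3*A*B*C - 2*A^2*x - 3*B^2*C - 2*B*C^2 - 3*A*B := by
    have h := mul_le_mul_of_nonneg_right h7.le (le_of_lt (mul_pos hB hC))
    have e1 : (3 - 2 * (x * A / (B * C))) * A * (B*C) = 3*A*B*C - 2*A^2*x := by
      field_simp
    have e2 : (3 * B + 2 * C + 3 * A / C) * (B*C) = 3*B^2*C + 2*B*C^2 + 3*A*B := by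
      field_simp
    rw [e1, e2] at h
    linarith
  -- consequence: 3A(C-1) ≥ 3BC + 2C²
  have hR : 0 ≤ 3*A*(C-1) - 3*B*C - 2*C^2 := by
    nlinarith [mul_pos (mul_pos hA hA) hx0, hB]
  have hP : 0 ≤ C^2 + 2*C - 1 - x*(1+C) := by nlinarith
  have hP0 : 0 ≤ B*C*(C-1)*((C - x) + B*(C+1-x) + B^2) := by
    have : (0:ℝ) ≤ (C - x) + B*(C+1-x) + B^2 := by nlinarith
    have h1' : (0:ℝ) ≤ B*C*(C-1) :=
      mul_nonneg (mul_nonneg hB.le hC.le) (by linarith)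
    exact mul_nonneg h1' this
  have t1 : 0 ≤ (A*B*(1+x)) * (3*A*(C-1) - 3*B*C - 2*C^2) :=
    mul_nonneg (by positivity) hR
  -- the remainder r is nonnegative
  have hr : 0 ≤ A^2*x*(C^2+2*C-1-x*(1+C)) + (3/2)*A^2*B*(C-1)*(1+x)
      - A*C*x*(C-x) + A*B*C*(2-C)*(1-x) + (3/2)*A*B^2*C*(1-x)
      + B*C*(C-1)*((C - x) + B*(C+1-x) + B^2) := by
    have hab2c : (0:ℝ) ≤ A*B^2*C := by positivity
    have habc : (0:ℝ) ≤ A*B*C := by positivity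
    rcases le_total C 2 with hc | hc
    · nlinarith [t1, hP0, hab2c,
        mul_nonneg (mul_nonneg (mul_nonneg hA.le hC.le)
          (sub_nonneg.2 hxC)) (sub_nonneg.2 hxB),
        mul_nonneg (mul_nonneg (mul_nonneg hA.le hB.le) hC.le) (by linarith : (0:ℝ) ≤ 2 - C),
        mul_nonneg (mul_nonneg (mul_nonneg (mul_nonneg hA.le hB.le) hC.le) hx0.le)
          (by linarith : (0:ℝ) ≤ 2*C - 1),
        mul_nonneg (mul_nonneg (sq_nonneg A) hx0.le) hP]
    · have hq : 0 ≤ C^3 + 2*C^2 + C - 1 - x*(C^2+C+1) := by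
        nlinarith [mul_nonneg (sub_nonneg.2 hxC) (by positivity : (0:ℝ) ≤ C^2+C+1)]
      nlinarith [t1, hP0, hab2c, habc,
        mul_nonneg (mul_nonneg (mul_nonneg hAC1 hx0.le) hA.le) hP,
        mul_nonneg (mul_nonneg hA.le hx0.le) hq,
        mul_nonneg (mul_nonneg (mul_nonneg (mul_nonneg hA.le hB.le) hC.le) hx0.le)
          (by linarith : (0:ℝ) ≤ C - 1)]
  have hM : 0 ≤ A*(2*C-1-x) := mul_nonneg hA.le (by linarith)
  -- the cleared-denominator inequality
  have hf : 0 ≤ (A+C-1)*((A-B)*(A-B-1))*((A-C)*(A-B-C+x))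
      + (B-x)*(A*(A-1))*((A-B)*(A-B-1))
      - (A-B+C-x-1)*(A*(A-1))*((A-C)*(A-B-C+x)) := by
    have key : (A+C-1)*((A-B)*(A-B-1))*((A-C)*(A-B-C+x))
        + (B-x)*(A*(A-1))*((A-B)*(A-B-1))
        - (A-B+C-x-1)*(A*(A-1))*((A-C)*(A-B-C+x))
        = (A^2*x*(C^2+2*C-1-x*(1+C)) + (3/2)*A^2*B*(C-1)*(1+x)
          - A*C*x*(C-x) + A*B*C*(2-C)*(1-x) + (3/2)*A*B^2*C*(1-x)
          + B*C*(C-1)*((C - x) + B*(C+1-x) + B^2))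
        + (A*(2*C-1-x))/2 * (3*A*B*C - 2*A^2*x - 3*B^2*C - 2*B*C^2 - 3*A*B) := by
      ring
    rw [key]
    have := mul_nonneg hM h7'
    linarith
  have hD : 0 < (A*(A-1))*((A-B)*(A-B-1))*((A-C)*(A-B-C+x)) := by positivity
  have e : -C / (A - 1) + (C - 1) / A + 1 / (A - C) - (C - x - 1) / (A - B)
      + (C - x) / (A - B - 1) - 1 / (A - B - C + x)
      = -(((A+C-1)*((A-B)*(A-B-1))*((A-C)*(A-B-C+x))
      + (B-x)*(A*(A-1))*((A-B)*(A-B-1))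
      - (A-B+C-x-1)*(A*(A-1))*((A-C)*(A-B-C+x)))
        / ((A*(A-1))*((A-B)*(A-B-1))*((A-C)*(A-B-C+x)))) := by
    field_simp
    ring
  rw [e]
  exact neg_nonpos.2 (div_nonneg hf hD.le)
end

section
/- Fix integers B, C, x with 0 ≤ x ≤ min(B, C), and define Φ(A) = (A−B−C+x−1)·ln(A−1−B) + (A−C)·ln A − (A−C−1)·ln(A−1) − (A−B−C+x)·ln(A−B) + ln(A−B) − ln A. Let A_low ≤ A_up be integers with Φ(A_up) ≥ 0, and suppose that every integer A with A_low ≤ A ≤ A_up satisfies B + 1 < A, B + C − x < A − 1, and A·x ≥ B + x + 2·B·x. If inequality (10), namely C(C,x)/C(A,B) ≤ (B/A)^{B−x}·(1−B/A)^{A−B−C+x}, holds for A = A_up, then it holds for every integer A with A_low ≤ A ≤ A_up. -/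
set_option maxHeartbeats 12000000
set_option linter.unreachableTactic false
set_option linter.unusedTactic false
set_option linter.unusedVariables false

lemma core_lb {u : ℝ} (h0 : 0 ≤ u) (h1 : u < 1) :
    2*u + (2/3)*u^3 ≤ Real.log (1+u) - Real.log (1-u) := by
  set F : ℝ → ℝ := fun w => Real.log (1+w) - Real.log (1-w) - (2*w + (2/3)*w^3) with hF
  have key : ∀ v : ℝ, 0 ≤ v → v < 1 →
      HasDerivAt F (1/(1+v) + 1/(1-v) - (2 + 2*v^2)) v := by
    intro v hv0 hv1
    have hne1 : (1:ℝ)+v ≠ 0 := by nlinarith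
    have hne2 : (1:ℝ)-v ≠ 0 := by nlinarith
    have d1 : HasDerivAt (fun w : ℝ => Real.log (1+w)) (1/(1+v)) v := by
      have := (((hasDerivAt_id v).const_add (1:ℝ)).log hne1)
      simpa using this
    have d2 : HasDerivAt (fun w : ℝ => Real.log (1-w)) (-1/(1-v)) v := by
      have := (((hasDerivAt_id v).const_sub (1:ℝ)).log hne2)
      simpa using this
    have d3 : HasDerivAt (fun w : ℝ => 2*w + (2/3)*w^3) (2 + (2/3)*(3*v^2)) v := by
      have p1 : HasDerivAt (fun w : ℝ => 2*w) 2 v := by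
        simpa using (hasDerivAt_id v).const_mul (2:ℝ)
      have p2 : HasDerivAt (fun w : ℝ => (2/3)*w^3) ((2/3)*(3*v^2)) v := by
        simpa using (hasDerivAt_pow 3 v).const_mul (2/3 : ℝ)
      exact p1.add p2
    have := (d1.sub d2).sub d3
    exact this.congr_deriv (by ring)
  have mono : MonotoneOn F (Set.Icc 0 u) := by
    apply monotoneOn_of_deriv_nonneg (convex_Icc 0 u)
    · intro v hv
      exact (key v hv.1 (lt_of_le_of_lt hv.2 h1)).continuousAt.continuousWithinAt
    · intro v hv
      rw [interior_Icc] at hv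
      exact (key v hv.1.le (lt_of_lt_of_le hv.2 h1.le)).differentiableAt.differentiableWithinAt
    · intro v hv
      rw [interior_Icc] at hv
      have hd := key v hv.1.le (lt_of_lt_of_le hv.2 h1.le)
      rw [hd.deriv]
      have hv0 : 0 < 1 + v := by nlinarith [hv.1]
      have hv2 : 0 < 1 - v := by nlinarith [lt_of_lt_of_le hv.2 h1.le]
      have e : 1/(1+v) + 1/(1-v) - (2 + 2*v^2) = 2*v^4/((1+v)*(1-v)) := by
        field_simp
        ring
      rw [e]
      positivity
  have h00 : F 0 ≤ F u := mono ⟨le_refl 0, h0⟩ ⟨h0, le_refl u⟩ h0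
  have hF0 : F 0 = 0 := by simp [hF]
  rw [hF0] at h00
  simp only [hF] at h00
  linarith

lemma core_ub {u : ℝ} (h0 : 0 ≤ u) (h1 : u < 1) :
    Real.log (1+u) - Real.log (1-u) ≤ 2*u + (2/3)*u^3/(1-u^2) := by
  set G : ℝ → ℝ := fun w => 2*w + (2/3)*w^3/(1-w^2) - (Real.log (1+w) - Real.log (1-w)) with hG
  have key : ∀ v : ℝ, 0 ≤ v → v < 1 →
      HasDerivAt G (2 + (2/3)*((3*v^2*(1-v^2) - v^3*(-(2*v)))/(1-v^2)^2) - (1/(1+v) - -1/(1-v))) v := by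
    intro v hv0 hv1
    have hne1 : (1:ℝ)+v ≠ 0 := by nlinarith
    have hne2 : (1:ℝ)-v ≠ 0 := by nlinarith
    have hne3 : (1:ℝ)-v^2 ≠ 0 := by nlinarith
    have d1 : HasDerivAt (fun w : ℝ => Real.log (1+w)) (1/(1+v)) v := by
      simpa using (((hasDerivAt_id v).const_add (1:ℝ)).log hne1)
    have d2 : HasDerivAt (fun w : ℝ => Real.log (1-w)) (-1/(1-v)) v := by
      simpa using (((hasDerivAt_id v).const_sub (1:ℝ)).log hne2)
    have dnum : HasDerivAt (fun w : ℝ => w^3) (3*v^2) v := by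
      simpa using hasDerivAt_pow 3 v
    have dden : HasDerivAt (fun w : ℝ => 1-w^2) (-(2*v)) v := by
      have := (hasDerivAt_pow 2 v).const_sub (1:ℝ)
      simpa using this
    have d3 : HasDerivAt (fun w : ℝ => w^3/(1-w^2)) ((3*v^2*(1-v^2) - v^3*(-(2*v)))/(1-v^2)^2) v :=
      dnum.div dden hne3
    have p1 : HasDerivAt (fun w : ℝ => 2*w) 2 v := by
      simpa using (hasDerivAt_id v).const_mul (2:ℝ)
    have p2 : HasDerivAt (fun w : ℝ => (2/3)*(w^3/(1-w^2))) ((2/3)*((3*v^2*(1-v^2) - v^3*(-(2*v)))/(1-v^2)^2)) v :=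
      d3.const_mul (2/3 : ℝ)
    have := (p1.add p2).sub (d1.sub d2)
    refine HasDerivAt.congr_deriv (this.congr_of_eventuallyEq (Filter.Eventually.of_forall fun w => ?_)) (by ring)
    simp only [hG, Pi.add_apply, Pi.sub_apply]; ring
  have mono : MonotoneOn G (Set.Icc 0 u) := by
    apply monotoneOn_of_deriv_nonneg (convex_Icc 0 u)
    · intro v hv
      exact (key v hv.1 (lt_of_le_of_lt hv.2 h1)).continuousAt.continuousWithinAt
    · intro v hv
      rw [interior_Icc] at hv
      exact (key v hv.1.le (lt_of_lt_of_le hv.2 h1.le)).differentiableAt.differentiableWithinAt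
    · intro v hv
      rw [interior_Icc] at hv
      have hd := key v hv.1.le (lt_of_lt_of_le hv.2 h1.le)
      rw [hd.deriv]
      have hv0 : 0 < 1 + v := by nlinarith [hv.1]
      have hv2 : 0 < 1 - v := by nlinarith [lt_of_lt_of_le hv.2 h1.le]
      have e : 2 + (2/3)*((3*v^2*(1-v^2) - v^3*(-(2*v)))/(1-v^2)^2) - (1/(1+v) - -1/(1-v))
          = (4/3)*v^4/((1+v)*(1-v))^2 := by
        have : (1:ℝ) - v^2 = (1+v)*(1-v) := by ring
        rw [this]
        field_simp
        ring
      rw [e]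
      positivity
  have h00 : G 0 ≤ G u := mono ⟨le_refl 0, h0⟩ ⟨h0, le_refl u⟩ h0
  have hG0 : G 0 = 0 := by simp [hG]
  rw [hG0] at h00
  simp only [hG] at h00
  linarith

lemma log_lb (t : ℝ) (ht : 2 ≤ t) :
    2/(2*t-1) + 2/(3*(2*t-1)^3) ≤ Real.log t - Real.log (t-1) := by
  have hd : (0:ℝ) < 2*t-1 := by linarith
  have hu0 : 0 ≤ 1/(2*t-1) := by positivity
  have hu1 : 1/(2*t-1) < 1 := by
    rw [div_lt_one hd]; linarith
  have h := core_lb hu0 hu1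
  have e1 : (1:ℝ) + 1/(2*t-1) = (2*t)/(2*t-1) := by field_simp; ring
  have e2 : (1:ℝ) - 1/(2*t-1) = (2*(t-1))/(2*t-1) := by field_simp; ring
  have ht0 : (0:ℝ) < t := by linarith
  have ht1 : (0:ℝ) < t - 1 := by linarith
  have e3 : Real.log ((2*t)/(2*t-1)) = Real.log 2 + Real.log t - Real.log (2*t-1) := by
    rw [Real.log_div (by positivity) (by positivity), Real.log_mul (by norm_num) (by positivity)]
  have e4 : Real.log ((2*(t-1))/(2*t-1)) = Real.log 2 + Real.log (t-1) - Real.log (2*t-1) := by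
    rw [Real.log_div (by positivity) (by positivity), Real.log_mul (by norm_num) (by positivity)]
  rw [e1, e2, e3, e4] at h
  have e5 : 2*(1/(2*t-1)) + (2/3)*(1/(2*t-1))^3 = 2/(2*t-1) + 2/(3*(2*t-1)^3) := by
    field_simp
  rw [e5] at h
  linarith

lemma log_ub (t : ℝ) (ht : 2 ≤ t) :
    Real.log t - Real.log (t-1) ≤ 2/(2*t-1) + 1/(6*t*(t-1)*(2*t-1)) := by
  have hd : (0:ℝ) < 2*t-1 := by linarith
  have hu0 : 0 ≤ 1/(2*t-1) := by positivity
  have hu1 : 1/(2*t-1) < 1 := by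
    rw [div_lt_one hd]; linarith
  have h := core_ub hu0 hu1
  have e1 : (1:ℝ) + 1/(2*t-1) = (2*t)/(2*t-1) := by field_simp; ring
  have e2 : (1:ℝ) - 1/(2*t-1) = (2*(t-1))/(2*t-1) := by field_simp; ring
  have ht0 : (0:ℝ) < t := by linarith
  have ht1 : (0:ℝ) < t - 1 := by linarith
  have e3 : Real.log ((2*t)/(2*t-1)) = Real.log 2 + Real.log t - Real.log (2*t-1) := by
    rw [Real.log_div (by positivity) (by positivity), Real.log_mul (by norm_num) (by positivity)]
  have e4 : Real.log ((2*(t-1))/(2*t-1)) = Real.log 2 + Real.log (t-1) - Real.log (2*t-1) := by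
    rw [Real.log_div (by positivity) (by positivity), Real.log_mul (by norm_num) (by positivity)]
  rw [e1, e2, e3, e4] at h
  have hne : (1:ℝ) - (1/(2*t-1))^2 ≠ 0 := by
    have : (1/(2*t-1))^2 < 1 := by
      have : 0 ≤ 1/(2*t-1) := hu0
      nlinarith [hu1]
    nlinarith
  have e6 : (1:ℝ) - (1/(2*t-1))^2 = (4*t*(t-1))/(2*t-1)^2 := by
    field_simp
    ring
  have e5 : 2*(1/(2*t-1)) + (2/3)*(1/(2*t-1))^3/(1-(1/(2*t-1))^2)
      = 2/(2*t-1) + 1/(6*t*(t-1)*(2*t-1)) := by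
    rw [e6, div_div_eq_mul_div]
    field_simp
    ring
  rw [e5] at h
  linarith

lemma polyS1 (t s : ℕ) : (0:ℝ) ≤ (45841/2) + 23466*(s:ℝ) + 8978*(s:ℝ)^2 + 1520*(s:ℝ)^3 + 96*(s:ℝ)^4 + 70829*(t:ℝ) + 60126*(t:ℝ)*(s:ℝ) + 18288*(t:ℝ)*(s:ℝ)^2 + 2304*(t:ℝ)*(s:ℝ)^3 + 96*(t:ℝ)*(s:ℝ)^4 + 84340*(t:ℝ)^2 + 54912*(t:ℝ)^2*(s:ℝ) + 11520*(t:ℝ)^2*(s:ℝ)^2 + 768*(t:ℝ)^2*(s:ℝ)^3 + 48832*(t:ℝ)^3 + 21504*(t:ℝ)^3*(s:ℝ) + 2304*(t:ℝ)^3*(s:ℝ)^2 + 13824*(t:ℝ)^4 + 3072*(t:ℝ)^4*(s:ℝ) + 1536*(t:ℝ)^5 := by positivity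

lemma polyS2 (t s : ℕ) : (0:ℝ) ≤ (875/2) + 440*(s:ℝ) + 146*(s:ℝ)^2 + 16*(s:ℝ)^3 + 440*(t:ℝ) + 292*(t:ℝ)*(s:ℝ) + 48*(t:ℝ)*(s:ℝ)^2 + 146*(t:ℝ)^2 + 48*(t:ℝ)^2*(s:ℝ) + 16*(t:ℝ)^3 := by positivity

lemma polyS3 (t s : ℕ) : (0:ℝ) ≤ 2009544390 + 6289836441*(s:ℝ) + 8798658939*(s:ℝ)^2 + 7246782336*(s:ℝ)^3 + 3893020440*(s:ℝ)^4 + 1425741336*(s:ℝ)^5 + 360584976*(s:ℝ)^6 + 62198592*(s:ℝ)^7 + 7004160*(s:ℝ)^8 + 465024*(s:ℝ)^9 + 13824*(s:ℝ)^10 + 10430944041*(t:ℝ) + 30007979568*(t:ℝ)*(s:ℝ) + 38290639893*(t:ℝ)*(s:ℝ)^2 + 28504188030*(t:ℝ)*(s:ℝ)^3 + 13684138320*(t:ℝ)*(s:ℝ)^4 + 4415108976*(t:ℝ)*(s:ℝ)^5 + 965714352*(t:ℝ)*(s:ℝ)^6 + 140527968*(t:ℝ)*(s:ℝ)^7 +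 12888192*(t:ℝ)*(s:ℝ)^8 + 660480*(t:ℝ)*(s:ℝ)^9 + 13824*(t:ℝ)*(s:ℝ)^10 + 24107391819*(t:ℝ)^2 + 62948652489*(t:ℝ)^2*(s:ℝ) + 72133531764*(t:ℝ)^2*(s:ℝ)^2 + 47573703168*(t:ℝ)^2*(s:ℝ)^3 + 19878219888*(t:ℝ)^2*(s:ℝ)^4 + 5448116784*(t:ℝ)^2*(s:ℝ)^5 + 977099520*(t:ℝ)^2*(s:ℝ)^6 + 110189568*(t:ℝ)^2*(s:ℝ)^7 + 7052544*(t:ℝ)^2*(s:ℝ)^8 + 193536*(t:ℝ)^2*(s:ℝ)^9 + 32834448972*(t:ℝ)^3 + 76722535674*(t:ℝ)^3*(s:ℝ) + 77547968448*(t:ℝ)^3*(s:ℝ)^2 + 44262737616*(t:ℝ)^3*(s:ℝ)^3 + 15592561824*(t:ℝ)^3*(s:ℝ)^4 + 3467675424*(t:ℝ)^3*(s:ℝ)^5 + 474720000*(t:ℝ)^3*(s:ℝ)^6 + 36496896*(t:ℝ)^3*(s:ℝ)^7 + 1202688*(t:ℝ)^3*(s:ℝ)^8 + 29340377580*(t:ℝ)^4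 + 60312325224*(t:ℝ)^4*(s:ℝ) + 52589956080*(t:ℝ)^4*(s:ℝ)^2 + 25206768624*(t:ℝ)^4*(s:ℝ)^3 + 7168883712*(t:ℝ)^4*(s:ℝ)^4 + 1208889024*(t:ℝ)^4*(s:ℝ)^5 + 111802368*(t:ℝ)^4*(s:ℝ)^6 + 4368384*(t:ℝ)^4*(s:ℝ)^7 + 18087505200*(t:ℝ)^5 + 32009301696*(t:ℝ)^5*(s:ℝ) + 23381325984*(t:ℝ)^5*(s:ℝ)^2 + 9021397920*(t:ℝ)^5*(s:ℝ)^3 + 1938481728*(t:ℝ)^5*(s:ℝ)^4 + 219829248*(t:ℝ)^5*(s:ℝ)^5 + 10271232*(t:ℝ)^5*(s:ℝ)^6 + 7858343664*(t:ℝ)^6 + 11630840208*(t:ℝ)^6*(s:ℝ) + 6826087872*(t:ℝ)^6*(s:ℝ)^2 + 1985469888*(t:ℝ)^6*(s:ℝ)^3 + 286140672*(t:ℝ)^6*(s:ℝ)^4 + 16339968*(t:ℝ)^6*(s:ℝ)^5 + 2408322048*(t:ℝ)^7 + 2860074336*(t:ℝ)^7*(s:ℝ) + 1263461952*(t:ℝ)^7*(s:ℝ)^2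 + 246047232*(t:ℝ)^7*(s:ℝ)^3 + 17819136*(t:ℝ)^7*(s:ℝ)^4 + 510600384*(t:ℝ)^8 + 455909376*(t:ℝ)^8*(s:ℝ) + 134673408*(t:ℝ)^8*(s:ℝ)^2 + 13160448*(t:ℝ)^8*(s:ℝ)^3 + 71371008*(t:ℝ)^9 + 42571776*(t:ℝ)^9*(s:ℝ) + 6303744*(t:ℝ)^9*(s:ℝ)^2 + 5922816*(t:ℝ)^10 + 1769472*(t:ℝ)^10*(s:ℝ) + 221184*(t:ℝ)^11 := by positivity

lemma key_ineq (t s : ℕ) (a m N E lgA lgA1 lgm lgm1 : ℝ)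
    (ha : a = 2*(t:ℝ)+(s:ℝ)+4) (hm : m = (t:ℝ)+(s:ℝ)+3)
    (hE1 : 1 ≤ E) (hEm : E ≤ m - 1) (hNE0 : 0 ≤ N - E) (hNE : N - E ≤ a - m - 1)
    (hlgA : 2/(2*a-1) + 2/(3*(2*a-1)^3) ≤ lgA)
    (hlgA1 : lgA1 ≤ 2/(2*(a+1)-1) + 1/(6*(a+1)*a*(2*(a+1)-1)))
    (hlgm : lgm ≤ 2/(2*m-1) + 1/(6*m*(m-1)*(2*m-1)))
    (hlgm1 : 2/(2*(m+1)-1) + 2/(3*(2*(m+1)-1)^3) ≤ lgm1)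
    (hphi1 : 0 ≤ (N+1)*lgA1 - (E+1)*lgm1) :
    0 ≤ N*lgA - E*lgm := by
  subst ha hm
  have hts : (0:ℝ) ≤ (t:ℝ) := Nat.cast_nonneg t
  have hss : (0:ℝ) ≤ (s:ℝ) := Nat.cast_nonneg s
  have hd1 : (0:ℝ) < 2*(2*(t:ℝ)+(s:ℝ)+4)-1 := by nlinarith
  have hd2 : (0:ℝ) < 2*(t:ℝ)+(s:ℝ)+4 := by nlinarith
  have hd3 : (0:ℝ) < 2*(t:ℝ)+(s:ℝ)+4+1 := by nlinarith
  have hd4 : (0:ℝ) < 2*(2*(t:ℝ)+(s:ℝ)+4+1)-1 := by nlinarith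
  have hd5 : (0:ℝ) < (t:ℝ)+(s:ℝ)+3 := by nlinarith
  have hd6 : (0:ℝ) < (t:ℝ)+(s:ℝ)+3-1 := by nlinarith
  have hd7 : (0:ℝ) < 2*((t:ℝ)+(s:ℝ)+3)-1 := by nlinarith
  have hd8 : (0:ℝ) < 2*((t:ℝ)+(s:ℝ)+3+1)-1 := by nlinarith
  have r1 : 2*(2*(t:ℝ)+(s:ℝ)+4)-1 = 4*(t:ℝ)+2*(s:ℝ)+7 := by ring
  have r2 : 2*(2*(t:ℝ)+(s:ℝ)+4+1)-1 = 4*(t:ℝ)+2*(s:ℝ)+9 := by ring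
  have r3 : 2*((t:ℝ)+(s:ℝ)+3)-1 = 2*(t:ℝ)+2*(s:ℝ)+5 := by ring
  have r4 : (t:ℝ)+(s:ℝ)+3-1 = (t:ℝ)+(s:ℝ)+2 := by ring
  have r5 : 2*((t:ℝ)+(s:ℝ)+3+1)-1 = 2*(t:ℝ)+2*(s:ℝ)+7 := by ring
  set Pa : ℝ := 2/(2*(2*(t:ℝ)+(s:ℝ)+4)-1) + 2/(3*(2*(2*(t:ℝ)+(s:ℝ)+4)-1)^3) with hPa
  set Qa1 : ℝ := 2/(2*(2*(t:ℝ)+(s:ℝ)+4+1)-1) + 1/(6*(2*(t:ℝ)+(s:ℝ)+4+1)*(2*(t:ℝ)+(s:ℝ)+4)*(2*(2*(t:ℝ)+(s:ℝ)+4+1)-1)) with hQa1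
  set Qm : ℝ := 2/(2*((t:ℝ)+(s:ℝ)+3)-1) + 1/(6*((t:ℝ)+(s:ℝ)+3)*((t:ℝ)+(s:ℝ)+3-1)*(2*((t:ℝ)+(s:ℝ)+3)-1)) with hQm
  set Pm1 : ℝ := 2/(2*((t:ℝ)+(s:ℝ)+3+1)-1) + 2/(3*(2*((t:ℝ)+(s:ℝ)+3+1)-1)^3) with hPm1
  have hS1 : 0 ≤ ((t:ℝ)+(s:ℝ)+3+1/2)*Qa1 - ((t:ℝ)+(s:ℝ)+3-1/2)*Pa := by
    have heq : ((t:ℝ)+(s:ℝ)+3+1/2)*Qa1 - ((t:ℝ)+(s:ℝ)+3-1/2)*Pa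
        = ((45841/2) + 23466*(s:ℝ) + 8978*(s:ℝ)^2 + 1520*(s:ℝ)^3 + 96*(s:ℝ)^4 + 70829*(t:ℝ) + 60126*(t:ℝ)*(s:ℝ) + 18288*(t:ℝ)*(s:ℝ)^2 + 2304*(t:ℝ)*(s:ℝ)^3 + 96*(t:ℝ)*(s:ℝ)^4 + 84340*(t:ℝ)^2 + 54912*(t:ℝ)^2*(s:ℝ) + 11520*(t:ℝ)^2*(s:ℝ)^2 + 768*(t:ℝ)^2*(s:ℝ)^3 + 48832*(t:ℝ)^3 + 21504*(t:ℝ)^3*(s:ℝ) + 2304*(t:ℝ)^3*(s:ℝ)^2 + 13824*(t:ℝ)^4 + 3072*(t:ℝ)^4*(s:ℝ) + 1536*(t:ℝ)^5) / ((4*(t:ℝ)+2*(s:ℝ)+7)^3 * (6*(2*(t:ℝ)+(s:ℝ)+5)*(2*(t:ℝ)+(s:ℝ)+4)*(4*(t:ℝ)+2*(s:ℝ)+9))) := by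
      rw [hQa1, hPa]
      simp only [r1, r2]
      field_simp
      ring
    rw [heq]
    apply div_nonneg (polyS1 t s)
    positivity
  have hS2 : 0 ≤ ((t:ℝ)+(s:ℝ)+3-1/2)*Qm - ((t:ℝ)+(s:ℝ)+3+1/2)*Pm1 := by
    have heq : ((t:ℝ)+(s:ℝ)+3-1/2)*Qm - ((t:ℝ)+(s:ℝ)+3+1/2)*Pm1
        = ((875/2) + 440*(s:ℝ) + 146*(s:ℝ)^2 + 16*(s:ℝ)^3 + 440*(t:ℝ) + 292*(t:ℝ)*(s:ℝ) + 48*(t:ℝ)*(s:ℝ)^2 + 146*(t:ℝ)^2 + 48*(t:ℝ)^2*(s:ℝ) + 16*(t:ℝ)^3) / ((2*(t:ℝ)+2*(s:ℝ)+7)^3 * (6*((t:ℝ)+(s:ℝ)+3)*((t:ℝ)+(s:ℝ)+2)*(2*(t:ℝ)+2*(s:ℝ)+5))) := by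
      rw [hQm, hPm1]
      simp only [r3, r4, r5]
      field_simp
      ring
    rw [heq]
    apply div_nonneg (polyS2 t s)
    positivity
  have hS3 : 0 ≤ ((t:ℝ)+(s:ℝ)+3-1/2)*((2*(t:ℝ)+(s:ℝ)+4-2)*Pa - ((t:ℝ)+(s:ℝ)+3-1)*Qm)
      - ((t:ℝ)+(s:ℝ)+3+1/2)*((2*(t:ℝ)+(s:ℝ)+4-1)*Qa1 - ((t:ℝ)+(s:ℝ)+3)*Pm1) := by
    have heq : ((t:ℝ)+(s:ℝ)+3-1/2)*((2*(t:ℝ)+(s:ℝ)+4-2)*Pa - ((t:ℝ)+(s:ℝ)+3-1)*Qm)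
        - ((t:ℝ)+(s:ℝ)+3+1/2)*((2*(t:ℝ)+(s:ℝ)+4-1)*Qa1 - ((t:ℝ)+(s:ℝ)+3)*Pm1)
        = (2009544390 + 6289836441*(s:ℝ) + 8798658939*(s:ℝ)^2 + 7246782336*(s:ℝ)^3 + 3893020440*(s:ℝ)^4 + 1425741336*(s:ℝ)^5 + 360584976*(s:ℝ)^6 + 62198592*(s:ℝ)^7 + 7004160*(s:ℝ)^8 + 465024*(s:ℝ)^9 + 13824*(s:ℝ)^10 + 10430944041*(t:ℝ) + 30007979568*(t:ℝ)*(s:ℝ) + 38290639893*(t:ℝ)*(s:ℝ)^2 + 28504188030*(t:ℝ)*(s:ℝ)^3 + 13684138320*(t:ℝ)*(s:ℝ)^4 + 4415108976*(t:ℝ)*(s:ℝ)^5 + 965714352*(t:ℝ)*(s:ℝ)^6 + 140527968*(t:ℝ)*(s:ℝ)^7 + 12888192*(t:ℝ)*(s:ℝ)^8 + 660480*(t:ℝ)*(s:ℝ)^9 + 13824*(t:ℝ)*(s:ℝ)^10 + 24107391819*(t:ℝ)^2 + 62948652489*(t:ℝ)^2*(s:ℝ) + 72133531764*(t:ℝ)^2*(s:ℝ)^2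 + 47573703168*(t:ℝ)^2*(s:ℝ)^3 + 19878219888*(t:ℝ)^2*(s:ℝ)^4 + 5448116784*(t:ℝ)^2*(s:ℝ)^5 + 977099520*(t:ℝ)^2*(s:ℝ)^6 + 110189568*(t:ℝ)^2*(s:ℝ)^7 + 7052544*(t:ℝ)^2*(s:ℝ)^8 + 193536*(t:ℝ)^2*(s:ℝ)^9 + 32834448972*(t:ℝ)^3 + 76722535674*(t:ℝ)^3*(s:ℝ) + 77547968448*(t:ℝ)^3*(s:ℝ)^2 + 44262737616*(t:ℝ)^3*(s:ℝ)^3 + 15592561824*(t:ℝ)^3*(s:ℝ)^4 + 3467675424*(t:ℝ)^3*(s:ℝ)^5 + 474720000*(t:ℝ)^3*(s:ℝ)^6 + 36496896*(t:ℝ)^3*(s:ℝ)^7 + 1202688*(t:ℝ)^3*(s:ℝ)^8 + 29340377580*(t:ℝ)^4 + 60312325224*(t:ℝ)^4*(s:ℝ) + 52589956080*(t:ℝ)^4*(s:ℝ)^2 + 25206768624*(t:ℝ)^4*(s:ℝ)^3 + 7168883712*(t:ℝ)^4*(s:ℝ)^4 + 1208889024*(t:ℝ)^4*(s:ℝ)^5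 + 111802368*(t:ℝ)^4*(s:ℝ)^6 + 4368384*(t:ℝ)^4*(s:ℝ)^7 + 18087505200*(t:ℝ)^5 + 32009301696*(t:ℝ)^5*(s:ℝ) + 23381325984*(t:ℝ)^5*(s:ℝ)^2 + 9021397920*(t:ℝ)^5*(s:ℝ)^3 + 1938481728*(t:ℝ)^5*(s:ℝ)^4 + 219829248*(t:ℝ)^5*(s:ℝ)^5 + 10271232*(t:ℝ)^5*(s:ℝ)^6 + 7858343664*(t:ℝ)^6 + 11630840208*(t:ℝ)^6*(s:ℝ) + 6826087872*(t:ℝ)^6*(s:ℝ)^2 + 1985469888*(t:ℝ)^6*(s:ℝ)^3 + 286140672*(t:ℝ)^6*(s:ℝ)^4 + 16339968*(t:ℝ)^6*(s:ℝ)^5 + 2408322048*(t:ℝ)^7 + 2860074336*(t:ℝ)^7*(s:ℝ) + 1263461952*(t:ℝ)^7*(s:ℝ)^2 + 246047232*(t:ℝ)^7*(s:ℝ)^3 + 17819136*(t:ℝ)^7*(s:ℝ)^4 + 510600384*(t:ℝ)^8 + 455909376*(t:ℝ)^8*(s:ℝ) + 134673408*(t:ℝ)^8*(s:ℝ)^2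 + 13160448*(t:ℝ)^8*(s:ℝ)^3 + 71371008*(t:ℝ)^9 + 42571776*(t:ℝ)^9*(s:ℝ) + 6303744*(t:ℝ)^9*(s:ℝ)^2 + 5922816*(t:ℝ)^10 + 1769472*(t:ℝ)^10*(s:ℝ) + 221184*(t:ℝ)^11) / ((4*(t:ℝ)+2*(s:ℝ)+7)^3 * (6*(2*(t:ℝ)+(s:ℝ)+5)*(2*(t:ℝ)+(s:ℝ)+4)*(4*(t:ℝ)+2*(s:ℝ)+9))
            * (6*((t:ℝ)+(s:ℝ)+3)*((t:ℝ)+(s:ℝ)+2)*(2*(t:ℝ)+2*(s:ℝ)+5)) * (2*(t:ℝ)+2*(s:ℝ)+7)^3) := by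
      rw [hQm, hPm1, hQa1, hPa]
      simp only [r1, r2, r3, r4, r5]
      field_simp
      ring
    rw [heq]
    apply div_nonneg (polyS3 t s)
    positivity
  have hN0 : 0 ≤ N := by linarith
  have hE0 : 0 ≤ E := by linarith
  have hmh : (0:ℝ) < (t:ℝ)+(s:ℝ)+3 - 1/2 := by nlinarith
  have hmh2 : (0:ℝ) < (t:ℝ)+(s:ℝ)+3 + 1/2 := by nlinarith
  have p1 : 0 ≤ ((t:ℝ)+(s:ℝ)+3-1/2)*N*(lgA - Pa) :=
    mul_nonneg (mul_nonneg hmh.le hN0) (by linarith)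
  have p2 : 0 ≤ ((t:ℝ)+(s:ℝ)+3-1/2)*E*(Qm - lgm) :=
    mul_nonneg (mul_nonneg hmh.le hE0) (by linarith)
  have p3 : 0 ≤ ((t:ℝ)+(s:ℝ)+3+1/2)*(N+1)*(Qa1 - lgA1) :=
    mul_nonneg (mul_nonneg hmh2.le (by linarith)) (by linarith)
  have p4 : 0 ≤ ((t:ℝ)+(s:ℝ)+3+1/2)*(E+1)*(lgm1 - Pm1) :=
    mul_nonneg (mul_nonneg hmh2.le (by linarith)) (by linarith)
  have q1 : 0 ≤ (((t:ℝ)+(s:ℝ)+3-1) - E) * ((((t:ℝ)+(s:ℝ)+3+1/2)*Qa1 - ((t:ℝ)+(s:ℝ)+3-1/2)*Pa) + (((t:ℝ)+(s:ℝ)+3-1/2)*Qm - ((t:ℝ)+(s:ℝ)+3+1/2)*Pm1)) :=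
    mul_nonneg (by linarith) (by linarith)
  have q2 : 0 ≤ ((2*(t:ℝ)+(s:ℝ)+4-((t:ℝ)+(s:ℝ)+3)-1) - (N-E)) * (((t:ℝ)+(s:ℝ)+3+1/2)*Qa1 - ((t:ℝ)+(s:ℝ)+3-1/2)*Pa) :=
    mul_nonneg (by linarith) (by linarith)
  have hW : 0 ≤ ((t:ℝ)+(s:ℝ)+3-1/2)*(N*lgA - E*lgm) - ((t:ℝ)+(s:ℝ)+3+1/2)*((N+1)*lgA1 - (E+1)*lgm1) := by
    nlinarith [p1, p2, p3, p4, q1, q2, hS3]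
  nlinarith [hW, mul_nonneg hmh2.le hphi1, hphi1]

noncomputable def PhiF (B C x A : ℕ) : ℝ :=
  ((A : ℝ) - B - C + x - 1) * Real.log ((A : ℝ) - 1 - B) + ((A : ℝ) - C) * Real.log A
    - ((A : ℝ) - C - 1) * Real.log ((A : ℝ) - 1) - ((A : ℝ) - B - C + x) * Real.log ((A : ℝ) - B)
    + Real.log ((A : ℝ) - B) - Real.log A

lemma PhiF_eq (B C x A : ℕ) : PhiF B C x A
    = ((A:ℝ)-(C:ℝ)-1) * (Real.log A - Real.log ((A:ℝ)-1))
      - ((A:ℝ)+(x:ℝ)-(B:ℝ)-(C:ℝ)-1) * (Real.log ((A:ℝ)-(B:ℝ)) - Real.log ((A:ℝ)-(B:ℝ)-1)) := by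
  unfold PhiF
  rw [show (A:ℝ) - 1 - (B:ℝ) = (A:ℝ) - (B:ℝ) - 1 by ring]
  ring

lemma phi_step (B C x A : ℕ) (hB : 1 ≤ B) (hx1 : 1 ≤ x) (hxB : x ≤ B) (hxC : x ≤ C)
    (hA2 : 2*B+2 ≤ A) (hEc : B + C + 2 ≤ A + x)
    (h1 : 0 ≤ PhiF B C x (A+1)) : 0 ≤ PhiF B C x A := by
  obtain ⟨t, ht⟩ : ∃ t, B = t+1 := ⟨B-1, by omega⟩
  obtain ⟨s, hs⟩ : ∃ s, A = 2*t+s+4 := ⟨A-(2*t+4), by omega⟩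
  have haR : (A:ℝ) = 2*(t:ℝ)+(s:ℝ)+4 := by rw [hs]; push_cast; ring
  have hbR : (B:ℝ) = (t:ℝ)+1 := by rw [ht]; push_cast; ring
  have hmR : (A:ℝ)-(B:ℝ) = (t:ℝ)+(s:ℝ)+3 := by rw [haR, hbR]; ring
  have hts : (0:ℝ) ≤ (t:ℝ) := Nat.cast_nonneg t
  have hss : (0:ℝ) ≤ (s:ℝ) := Nat.cast_nonneg s
  have hbig : (4:ℝ) ≤ (A:ℝ) := by rw [haR]; linarith
  have hm2 : (2:ℝ) ≤ (A:ℝ)-(B:ℝ) := by rw [hmR]; linarith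
  have hlgA := log_lb (A:ℝ) (by linarith)
  have hlgA1 := log_ub ((A:ℝ)+1) (by linarith)
  rw [show (A:ℝ)+1-1 = (A:ℝ) by ring] at hlgA1
  have hlgm := log_ub ((A:ℝ)-(B:ℝ)) hm2
  have hlgm1 := log_lb ((A:ℝ)-(B:ℝ)+1) (by linarith)
  rw [show (A:ℝ)-(B:ℝ)+1-1 = (A:ℝ)-(B:ℝ) by ring] at hlgm1
  have e0 := PhiF_eq B C x A
  have e1 := PhiF_eq B C x (A+1)
  push_cast at e1
  rw [show (A:ℝ)+1-1 = (A:ℝ) by ring, show (A:ℝ)+1-(B:ℝ)-1 = (A:ℝ)-(B:ℝ) by ring,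
      show (A:ℝ)+1-(B:ℝ) = (A:ℝ)-(B:ℝ)+1 by ring] at e1
  rw [e1] at h1
  rw [e0]
  have hxR : (1:ℝ) ≤ (x:ℝ) := by exact_mod_cast hx1
  have hxBR : (x:ℝ) ≤ (B:ℝ) := by exact_mod_cast hxB
  have hxCR : (x:ℝ) ≤ (C:ℝ) := by exact_mod_cast hxC
  have hEcR : (B:ℝ)+(C:ℝ)+2 ≤ (A:ℝ)+(x:ℝ) := by exact_mod_cast hEc
  exact key_ineq t s ((A:ℝ)) ((A:ℝ)-(B:ℝ)) ((A:ℝ)-(C:ℝ)-1) ((A:ℝ)+(x:ℝ)-(B:ℝ)-(C:ℝ)-1)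
    _ _ _ _ haR hmR (by linarith) (by linarith) (by linarith) (by linarith)
    hlgA hlgA1 hlgm hlgm1 (by linarith [h1])

lemma choose_id (A B : ℕ) (hBA : B ≤ A) :
    (A+1) * A.choose B = (A+1).choose B * (A+1-B) := by
  have h := Nat.add_one_mul_choose_eq A (A-B)
  rw [Nat.choose_symm hBA] at h
  rw [show A - B + 1 = A + 1 - B by omega] at h
  rw [Nat.choose_symm (show B ≤ A+1 by omega)] at h
  exact h

lemma step10 (B C x A : ℕ) (hB : 1 ≤ B) (hxB : x ≤ B) (hBA : B+2 ≤ A) (hBC : B+C ≤ A+x)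
    (hphi : 0 ≤ PhiF B C x (A+1))
    (h : (C.choose x : ℝ) / ((A+1).choose B : ℝ) ≤
      ((B:ℝ)/((A+1 : ℕ):ℝ)) ^ (B-x) * (1 - (B:ℝ)/((A+1 : ℕ):ℝ)) ^ (A+1+x-B-C)) :
    (C.choose x : ℝ) / (A.choose B : ℝ) ≤
      ((B:ℝ)/(A:ℝ)) ^ (B-x) * (1 - (B:ℝ)/(A:ℝ)) ^ (A+x-B-C) := by
  have hAp : (0:ℝ) < (A:ℝ) := by exact_mod_cast (show 0 < A by omega)
  have hBp : (0:ℝ) < (B:ℝ) := by exact_mod_cast hB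
  have hBAR : (B:ℝ)+2 ≤ (A:ℝ) := by exact_mod_cast hBA
  have hABp : (0:ℝ) < (A:ℝ)-(B:ℝ) := by linarith
  have hA1Bp : (0:ℝ) < (A:ℝ)+1-(B:ℝ) := by linarith
  have hA1p : (0:ℝ) < (A:ℝ)+1 := by linarith
  have hchA : (0:ℝ) < (A.choose B : ℝ) := by
    exact_mod_cast Nat.choose_pos (show B ≤ A by omega)
  have hchA1 : (0:ℝ) < ((A+1).choose B : ℝ) := by
    exact_mod_cast Nat.choose_pos (show B ≤ A+1 by omega)
  have ec3 : ((B-x:ℕ):ℝ) = (B:ℝ)-(x:ℝ) := Nat.cast_sub hxB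
  have ec1 : ((A+x-B-C:ℕ):ℝ) = (A:ℝ)+(x:ℝ)-(B:ℝ)-(C:ℝ) := by
    rw [show A+x-B-C = (A+x)-(B+C) by omega, Nat.cast_sub hBC]; push_cast; ring
  have ec2 : ((A+1+x-B-C:ℕ):ℝ) = (A:ℝ)+1+(x:ℝ)-(B:ℝ)-(C:ℝ) := by
    rw [show A+1+x-B-C = (A+1+x)-(B+C) by omega, Nat.cast_sub (by omega)]; push_cast; ring
  rw [div_le_iff₀ hchA1] at h
  push_cast at h
  rw [show (1:ℝ) - (B:ℝ)/((A:ℝ)+1) = ((A:ℝ)+1-(B:ℝ))/((A:ℝ)+1) by field_simp] at h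
  have hRA : (0:ℝ) < ((B:ℝ)/(A:ℝ))^(B-x) * (((A:ℝ)-(B:ℝ))/(A:ℝ))^(A+x-B-C) * (A.choose B : ℝ) :=
    mul_pos (mul_pos (pow_pos (div_pos hBp hAp) _) (pow_pos (div_pos hABp hAp) _)) hchA
  have hRA1 : (0:ℝ) < ((B:ℝ)/((A:ℝ)+1))^(B-x) * (((A:ℝ)+1-(B:ℝ))/((A:ℝ)+1))^(A+1+x-B-C) * ((A+1).choose B : ℝ) :=
    mul_pos (mul_pos (pow_pos (div_pos hBp hA1p) _) (pow_pos (div_pos hA1Bp hA1p) _)) hchA1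
  have eRA : Real.log (((B:ℝ)/(A:ℝ))^(B-x) * (((A:ℝ)-(B:ℝ))/(A:ℝ))^(A+x-B-C) * (A.choose B : ℝ))
      = ((B:ℝ)-(x:ℝ))*(Real.log B - Real.log A)
        + ((A:ℝ)+(x:ℝ)-(B:ℝ)-(C:ℝ))*(Real.log ((A:ℝ)-(B:ℝ)) - Real.log A)
        + Real.log (A.choose B : ℝ) := by
    rw [Real.log_mul (by positivity) hchA.ne',
        Real.log_mul (by positivity) (by positivity),
        Real.log_pow, Real.log_pow,
        Real.log_div hBp.ne' hAp.ne', Real.log_div hABp.ne' hAp.ne', ec3, ec1]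
  have eRA1 : Real.log (((B:ℝ)/((A:ℝ)+1))^(B-x) * (((A:ℝ)+1-(B:ℝ))/((A:ℝ)+1))^(A+1+x-B-C) * ((A+1).choose B : ℝ))
      = ((B:ℝ)-(x:ℝ))*(Real.log B - Real.log ((A:ℝ)+1))
        + ((A:ℝ)+1+(x:ℝ)-(B:ℝ)-(C:ℝ))*(Real.log ((A:ℝ)+1-(B:ℝ)) - Real.log ((A:ℝ)+1))
        + Real.log (((A+1).choose B : ℕ) : ℝ) := by
    rw [Real.log_mul (by positivity) hchA1.ne',
        Real.log_mul (by positivity) (by positivity),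
        Real.log_pow, Real.log_pow,
        Real.log_div hBp.ne' hA1p.ne', Real.log_div hA1Bp.ne' hA1p.ne', ec3, ec2]
  have hchR : ((A:ℝ)+1) * (A.choose B:ℝ) = (((A+1).choose B : ℕ):ℝ) * ((A:ℝ)+1-(B:ℝ)) := by
    have hc := congrArg (fun n : ℕ => (n:ℝ)) (choose_id A B (by omega))
    push_cast [Nat.cast_sub (show B ≤ A+1 by omega)] at hc
    convert hc using 2 <;> push_cast <;> ring
  have hlogch : Real.log ((A:ℝ)+1) + Real.log (A.choose B:ℝ)
      = Real.log (((A+1).choose B : ℕ):ℝ) + Real.log ((A:ℝ)+1-(B:ℝ)) := by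
    rw [← Real.log_mul hA1p.ne' hchA.ne', ← Real.log_mul hchA1.ne' hA1Bp.ne', hchR]
  have e1 := PhiF_eq B C x (A+1)
  push_cast at e1
  rw [show (A:ℝ)+1-1 = (A:ℝ) by ring, show (A:ℝ)+1-(B:ℝ)-1 = (A:ℝ)-(B:ℝ) by ring] at e1
  have key : Real.log (((B:ℝ)/(A:ℝ))^(B-x) * (((A:ℝ)-(B:ℝ))/(A:ℝ))^(A+x-B-C) * (A.choose B : ℝ))
      = Real.log (((B:ℝ)/((A:ℝ)+1))^(B-x) * (((A:ℝ)+1-(B:ℝ))/((A:ℝ)+1))^(A+1+x-B-C) * ((A+1).choose B : ℝ))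
        + PhiF B C x (A+1) := by
    rw [eRA, eRA1, e1]
    linear_combination hlogch
  have hle : ((B:ℝ)/((A:ℝ)+1))^(B-x) * (((A:ℝ)+1-(B:ℝ))/((A:ℝ)+1))^(A+1+x-B-C) * ((A+1).choose B : ℝ)
      ≤ ((B:ℝ)/(A:ℝ))^(B-x) * (((A:ℝ)-(B:ℝ))/(A:ℝ))^(A+x-B-C) * (A.choose B : ℝ) := by
    have h2 : Real.log (((B:ℝ)/((A:ℝ)+1))^(B-x) * (((A:ℝ)+1-(B:ℝ))/((A:ℝ)+1))^(A+1+x-B-C) * ((A+1).choose B : ℝ))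
        ≤ Real.log (((B:ℝ)/(A:ℝ))^(B-x) * (((A:ℝ)-(B:ℝ))/(A:ℝ))^(A+x-B-C) * (A.choose B : ℝ)) := by
      rw [key]; linarith
    calc ((B:ℝ)/((A:ℝ)+1))^(B-x) * (((A:ℝ)+1-(B:ℝ))/((A:ℝ)+1))^(A+1+x-B-C) * ((A+1).choose B : ℝ)
        = Real.exp (Real.log (((B:ℝ)/((A:ℝ)+1))^(B-x) * (((A:ℝ)+1-(B:ℝ))/((A:ℝ)+1))^(A+1+x-B-C) * ((A+1).choose B : ℝ))) := (Real.exp_log hRA1).symm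
      _ ≤ Real.exp (Real.log (((B:ℝ)/(A:ℝ))^(B-x) * (((A:ℝ)-(B:ℝ))/(A:ℝ))^(A+x-B-C) * (A.choose B : ℝ))) := Real.exp_le_exp.2 h2
      _ = _ := Real.exp_log hRA
  rw [div_le_iff₀ hchA, show (1:ℝ) - (B:ℝ)/(A:ℝ) = ((A:ℝ)-(B:ℝ))/(A:ℝ) by field_simp]
  linarith [h, hle]



/-- Property 4, first part: backward induction on the population size `A` for
inequality (10), controlled by the sign of
`Φ(A) = (A−B−C+x−1)ln(A−1−B) + (A−C)ln A − (A−C−1)ln(A−1) − (A−B−C+x)ln(A−B) + ln(A−B) − ln A`. -/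
theorem stmt_13 (B C x : ℕ) (hxB : x ≤ B) (hxC : x ≤ C)
    (Alow Aup : ℕ) (hA : Alow ≤ Aup)
    (hΦ : 0 ≤ ((Aup : ℝ) - B - C + x - 1) * Real.log ((Aup : ℝ) - 1 - B)
      + ((Aup : ℝ) - C) * Real.log Aup - ((Aup : ℝ) - C - 1) * Real.log ((Aup : ℝ) - 1)
      - ((Aup : ℝ) - B - C + x) * Real.log ((Aup : ℝ) - B)
      + Real.log ((Aup : ℝ) - B) - Real.log Aup)
    (hcond : ∀ A : ℕ, Alow ≤ A → A ≤ Aup →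
      B + 1 < A ∧ B + C + 2 ≤ A + x ∧ A * x ≥ B + x + 2 * B * x)
    (h10 : (C.choose x : ℝ) / (Aup.choose B : ℝ) ≤
      ((B : ℝ) / Aup) ^ (B - x) * (1 - (B : ℝ) / Aup) ^ (Aup + x - B - C)) :
    ∀ A : ℕ, Alow ≤ A → A ≤ Aup →
      (C.choose x : ℝ) / (A.choose B : ℝ) ≤
        ((B : ℝ) / A) ^ (B - x) * (1 - (B : ℝ) / A) ^ (A + x - B - C) := by
  rcases Nat.eq_zero_or_pos B with hB0 | hBpos
  · subst hB0
    have hx0 : x = 0 := by omega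
    subst hx0
    intro A _ _
    simp [Nat.choose_zero_right]
  · have hΦ' : 0 ≤ PhiF B C x Aup := hΦ
    have hx1 : 1 ≤ x := by
      obtain ⟨h1, h2, h3⟩ := hcond Aup hA le_rfl
      rcases Nat.eq_zero_or_pos x with h0 | h
      · subst h0; simp at h3; omega
      · exact h
    have key : ∀ n A, A + n = Aup → Alow ≤ A →
        0 ≤ PhiF B C x A ∧ ((C.choose x : ℝ) / (A.choose B : ℝ) ≤
          ((B : ℝ) / A) ^ (B - x) * (1 - (B : ℝ) / A) ^ (A + x - B - C)) := by
      intro n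
      induction n with
      | zero =>
        intro A hAe _
        have hAeq : A = Aup := by omega
        subst hAeq
        exact ⟨hΦ', h10⟩
      | succ n ih =>
        intro A hAe hlowA
        have hup' : A ≤ Aup := by omega
        have ihA := ih (A+1) (by omega) (by omega)
        obtain ⟨hc1, hc2, hc3⟩ := hcond A hlowA hup'
        have hA2B : 2*B+2 ≤ A := by
          by_contra hcc
          push_neg at hcc
          have h4 : A*x ≤ 2*(B*x)+x := by
            calc A*x ≤ (2*B+1)*x := Nat.mul_le_mul_right x (by omega)
              _ = 2*(B*x)+x := by ring
          have h6 : B+x+2*(B*x) ≤ A*x := by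
            calc B+x+2*(B*x) = B+x+2*B*x := by ring
              _ ≤ A*x := hc3
          have h8 := le_trans h6 h4
          rw [show 2*(B*x)+x = x+2*(B*x) by ring] at h8
          rw [show B+x+2*(B*x) = (B+x)+2*(B*x) by ring] at h8
          have h9 := Nat.le_of_add_le_add_right h8
          omega
        have hPhiA : 0 ≤ PhiF B C x A :=
          phi_step B C x A hBpos hx1 hxB hxC hA2B hc2 ihA.1
        have hstep := step10 B C x A hBpos hxB (by omega) (by omega) ihA.1 ihA.2
        exact ⟨hPhiA, hstep⟩
    intro A hlow hup
    exact (key (Aup - A) A (by omega) hlow).2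
end

section
/- Fix integers A, C, x with 0 ≤ x ≤ C, and define G(B) = (B−x)·ln(B+1) + (A−B−C−1+x)·ln(A−1−B) − (B−x)·ln B − (A−B−C+x−1)·ln(A−B). Let B_low ≤ B_up be integers with G(B_low) ≥ 0, and suppose that every integer B with B_low ≤ B ≤ B_up satisfies x ≤ B, 0 < B, B + 1 < A, B + C − x < A − 1, and A·x ≥ B + x + 2·B·x. If inequality (10), namely C(C,x)/C(A,B) ≤ (B/A)^{B−x}·(1−B/A)^{A−B−C+x}, holds for B = B_low, then it holds for every integer B with B_low ≤ B ≤ B_up. -/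
/-- Key log inequality: if `1 ≤ n` and `0 ≤ p ≤ n` then
`p·(log(n+1) − log n) ≤ (p+1)·(log(n+2) − log(n+1))`. -/
private lemma aux_log_key (n p : ℝ) (hn : 1 ≤ n) (hp0 : 0 ≤ p) (hpn : p ≤ n) :
    p * (Real.log (n+1) - Real.log n) ≤ (p+1) * (Real.log (n+2) - Real.log (n+1)) := by
  have hn0 : (0:ℝ) < n := by linarith
  have h1 : (0:ℝ) < n + 1 := by linarith
  have h2 : (0:ℝ) < n + 2 := by linarith
  have d1 : 1/(n+2) ≤ Real.log (n+2) - Real.log (n+1) := by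
    have h := Real.log_le_sub_one_of_pos (show (0:ℝ) < (n+1)/(n+2) by positivity)
    rw [Real.log_div h1.ne' h2.ne'] at h
    have he : (n+1)/(n+2) - 1 = -(1/(n+2)) := by
      field_simp
      norm_num
    linarith [h, he]
  have d2 : 2*Real.log (n+1) - Real.log n - Real.log (n+2) ≤ 1/(n*(n+2)) := by
    have h := Real.log_le_sub_one_of_pos (show (0:ℝ) < ((n+1)*(n+1))/(n*(n+2)) by positivity)
    rw [Real.log_div (by positivity) (by positivity), Real.log_mul h1.ne' h1.ne',
      Real.log_mul hn0.ne' h2.ne'] at h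
    have he : ((n+1)*(n+1))/(n*(n+2)) - 1 = 1/(n*(n+2)) := by field_simp; ring
    linarith
  have hb : 0 ≤ Real.log (n+2) - Real.log (n+1) := by
    have : (0:ℝ) < 1/(n+2) := by positivity
    linarith
  have d2' : n*(2*Real.log (n+1) - Real.log n - Real.log (n+2)) ≤ 1/(n+2) := by
    have h := mul_le_mul_of_nonneg_left d2 hn0.le
    have he : n*(1/(n*(n+2))) = 1/(n+2) := by field_simp
    linarith
  have key : n * (Real.log (n+1) - Real.log n) ≤ (n+1) * (Real.log (n+2) - Real.log (n+1)) := by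
    nlinarith [d1, d2']
  have h4 := mul_le_mul_of_nonneg_left key hp0
  have hbn : 0 ≤ (n - p) * (Real.log (n+2) - Real.log (n+1)) :=
    mul_nonneg (by linarith) hb
  have h6 : n * (p * (Real.log (n+1) - Real.log n))
      ≤ n * ((p+1) * (Real.log (n+2) - Real.log (n+1))) := by nlinarith [h4, hbn]
  exact le_of_mul_le_mul_left h6 hn0

set_option maxHeartbeats 1000000 in
/-- Property 4, second part: induction on the number of marked items `B` for
inequality (10), controlled by the sign of
`G(B) = (B−x)ln(B+1) + (A−B−C−1+x)ln(A−1−B) − (B−x)ln B − (A−B−C+x−1)ln(A−B)`. -/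
theorem stmt_14 (A C x : ℕ) (hxC : x ≤ C)
    (Blow Bup : ℕ) (hB : Blow ≤ Bup)
    (hG : 0 ≤ ((Blow : ℝ) - x) * Real.log ((Blow : ℝ) + 1)
      + ((A : ℝ) - Blow - C - 1 + x) * Real.log ((A : ℝ) - 1 - Blow)
      - ((Blow : ℝ) - x) * Real.log Blow
      - ((A : ℝ) - Blow - C + x - 1) * Real.log ((A : ℝ) - Blow))
    (hcond : ∀ B : ℕ, Blow ≤ B → B ≤ Bup →
      x ≤ B ∧ 0 < B ∧ B + 1 < A ∧ B + C + 2 ≤ A + x ∧ A * x ≥ B + x + 2 * B * x)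
    (h10 : (C.choose x : ℝ) / (A.choose Blow : ℝ) ≤
      ((Blow : ℝ) / A) ^ (Blow - x) * (1 - (Blow : ℝ) / A) ^ (A + x - Blow - C)) :
    ∀ B : ℕ, Blow ≤ B → B ≤ Bup →
      (C.choose x : ℝ) / (A.choose B : ℝ) ≤
        ((B : ℝ) / A) ^ (B - x) * (1 - (B : ℝ) / A) ^ (A + x - B - C) := by
  suffices H : ∀ B : ℕ, Blow ≤ B → B ≤ Bup →
      (0 ≤ ((B : ℝ) - x) * Real.log ((B : ℝ) + 1)
        + ((A : ℝ) - B - C - 1 + x) * Real.log ((A : ℝ) - 1 - B)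
        - ((B : ℝ) - x) * Real.log B
        - ((A : ℝ) - B - C + x - 1) * Real.log ((A : ℝ) - B))
      ∧ (C.choose x : ℝ) / (A.choose B : ℝ) ≤
        ((B : ℝ) / A) ^ (B - x) * (1 - (B : ℝ) / A) ^ (A + x - B - C) by
    intro B h1 h2; exact (H B h1 h2).2
  intro B hBl
  induction B, hBl using Nat.le_induction with
  | base => intro _; exact ⟨hG, h10⟩
  | succ B hBl ih =>
    intro hsu
    have hBu : B ≤ Bup := by omega
    obtain ⟨hxB, hB0, hB1A, hBC, -⟩ := hcond B hBl hBu
    obtain ⟨-, -, hB2A, hBC3, -⟩ := hcond (B+1) (by omega) hsu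
    obtain ⟨ihG, ihI⟩ := ih hBu
    have hA0 : 0 < A := by omega
    -- real versions of the numeric conditions
    have hbR : (1:ℝ) ≤ (B:ℝ) := by exact_mod_cast hB0
    have hxbR : (x:ℝ) ≤ (B:ℝ) := by exact_mod_cast hxB
    have hxCR : (x:ℝ) ≤ (C:ℝ) := by exact_mod_cast hxC
    have haR : (B:ℝ) + 3 ≤ (A:ℝ) := by exact_mod_cast (show B + 3 ≤ A by omega)
    have hBC3R : (B:ℝ) + (C:ℝ) + 3 ≤ (A:ℝ) + (x:ℝ) := by
      exact_mod_cast (show B + C + 3 ≤ A + x by omega)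
    have hx0R : (0:ℝ) ≤ (x:ℝ) := by positivity
    constructor
    · -- G(B+1) ≥ 0 from G(B) ≥ 0 and monotonicity of G
      have t1 := aux_log_key (B:ℝ) ((B:ℝ) - x) hbR (by linarith) (by linarith)
      have t2 := aux_log_key ((A:ℝ) - B - 2) ((A:ℝ) - B - C - 2 + x)
        (by linarith) (by linarith) (by linarith)
      push_cast
      ring_nf
      ring_nf at t1 t2 ihG
      linarith [t1, t2, ihG]
    · -- inequality (10) at B+1
      obtain ⟨p, hp⟩ : ∃ p, B - x = p := ⟨_, rfl⟩
      obtain ⟨m', hm'⟩ : ∃ m, A + x - B - C - 1 = m := ⟨_, rfl⟩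
      have eIB : A + x - B - C = m' + 1 := by omega
      have eg1 : B + 1 - x = p + 1 := by omega
      have eg2 : A + x - (B+1) - C = m' := by omega
      have hpc : (p:ℝ) = (B:ℝ) - x := by
        rw [← hp]; exact Nat.cast_sub hxB
      have hm'c : (m':ℝ) = (A:ℝ) + x - B - C - 1 := by
        have h : m' + (B + C + 1) = A + x := by omega
        have h2 := congrArg (fun t : ℕ => (t:ℝ)) h
        push_cast at h2; linarith
      -- positivity facts
      have hbpos : (0:ℝ) < (B:ℝ) := by linarith
      have hb1pos : (0:ℝ) < (B:ℝ) + 1 := by linarith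
      have habpos : (0:ℝ) < (A:ℝ) - B := by linarith
      have hab1pos : (0:ℝ) < (A:ℝ) - 1 - B := by linarith
      have hapos : (0:ℝ) < (A:ℝ) := by exact_mod_cast hA0
      have hch0 : (0:ℝ) < (A.choose B : ℝ) := by
        exact_mod_cast Nat.choose_pos (show B ≤ A by omega)
      have hch1 : (0:ℝ) < (A.choose (B+1) : ℝ) := by
        exact_mod_cast Nat.choose_pos (show B + 1 ≤ A by omega)
      -- product form of G(B) ≥ 0
      have hlog : (p:ℝ) * Real.log B + (m':ℝ) * Real.log ((A:ℝ) - B)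
          ≤ (p:ℝ) * Real.log ((B:ℝ)+1) + (m':ℝ) * Real.log ((A:ℝ) - 1 - B) := by
        rw [hpc, hm'c]; linarith [ihG]
      have hlog2 : Real.log ((B:ℝ)^p * ((A:ℝ) - B)^m')
          ≤ Real.log (((B:ℝ)+1)^p * ((A:ℝ) - 1 - B)^m') := by
        rw [Real.log_mul (by positivity) (by positivity),
          Real.log_mul (by positivity) (by positivity),
          Real.log_pow, Real.log_pow, Real.log_pow, Real.log_pow]
        linarith [hlog]
      have hprod : (B:ℝ)^p * ((A:ℝ) - B)^m' ≤ ((B:ℝ)+1)^p * ((A:ℝ) - 1 - B)^m' :=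
        (Real.log_le_log_iff (by positivity) (by positivity)).mp hlog2
      -- choose identity
      have hch : (A.choose (B+1) : ℝ) * ((B:ℝ)+1) = (A.choose B : ℝ) * ((A:ℝ) - B) := by
        have h := Nat.choose_succ_right_eq A B
        have h2 := congrArg (fun t : ℕ => (t:ℝ)) h
        push_cast [Nat.cast_sub (show B ≤ A by omega)] at h2
        linarith
      -- rewrite goal and hypothesis into explicit form
      rw [hp, eIB] at ihI
      have hone : (1:ℝ) - ((B:ℝ)+1)/A = ((A:ℝ) - 1 - B)/A := by
        field_simp
        ring
      have hone0 : (1:ℝ) - (B:ℝ)/A = ((A:ℝ) - B)/A := by field_simp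
      rw [hone0] at ihI
      rw [eg1, eg2]
      push_cast
      rw [hone, div_le_iff₀ hch1]
      have hK : (C.choose x : ℝ) ≤ ((B:ℝ)/A)^p * (((A:ℝ) - B)/A)^(m'+1) * (A.choose B : ℝ) :=
        (div_le_iff₀ hch0).mp ihI
      -- the core step inequality
      have hstep : ((B:ℝ)/A)^p * (((A:ℝ) - B)/A)^(m'+1) * ((B:ℝ)+1)
          ≤ (((B:ℝ)+1)/A)^(p+1) * (((A:ℝ) - 1 - B)/A)^m' * ((A:ℝ) - B) := by
        have eL : ((B:ℝ)/A)^p * (((A:ℝ) - B)/A)^(m'+1) * ((B:ℝ)+1)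
            = ((B:ℝ)^p * ((A:ℝ) - B)^m' * (((A:ℝ) - B) * ((B:ℝ)+1))) / (A:ℝ)^(p+(m'+1)) := by
          rw [div_pow, div_pow, pow_add, pow_succ]
          field_simp
          ring
        have eR : (((B:ℝ)+1)/A)^(p+1) * (((A:ℝ) - 1 - B)/A)^m' * ((A:ℝ) - B)
            = (((B:ℝ)+1)^p * ((A:ℝ) - 1 - B)^m' * (((A:ℝ) - B) * ((B:ℝ)+1))) / (A:ℝ)^(p+(m'+1)) := by
          rw [div_pow, div_pow, pow_add, pow_succ]
          field_simp
          ring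
        rw [eL, eR]
        gcongr ?_ / _
        calc (B:ℝ)^p * ((A:ℝ) - B)^m' * (((A:ℝ) - B) * ((B:ℝ)+1))
            ≤ ((B:ℝ)+1)^p * ((A:ℝ) - 1 - B)^m' * (((A:ℝ) - B) * ((B:ℝ)+1)) :=
              mul_le_mul_of_nonneg_right hprod (by positivity)
          _ = _ := by ring
      -- combine
      have h5 : ((B:ℝ)/A)^p * (((A:ℝ) - B)/A)^(m'+1) * (A.choose B : ℝ) * ((B:ℝ)+1)
          ≤ (((B:ℝ)+1)/A)^(p+1) * (((A:ℝ) - 1 - B)/A)^m' * (A.choose (B+1) : ℝ) * ((B:ℝ)+1) := by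
        calc ((B:ℝ)/A)^p * (((A:ℝ) - B)/A)^(m'+1) * (A.choose B : ℝ) * ((B:ℝ)+1)
            = (((B:ℝ)/A)^p * (((A:ℝ) - B)/A)^(m'+1) * ((B:ℝ)+1)) * (A.choose B : ℝ) := by ring
          _ ≤ ((((B:ℝ)+1)/A)^(p+1) * (((A:ℝ) - 1 - B)/A)^m' * ((A:ℝ) - B)) * (A.choose B : ℝ) :=
              mul_le_mul_of_nonneg_right hstep hch0.le
          _ = (((B:ℝ)+1)/A)^(p+1) * (((A:ℝ) - 1 - B)/A)^m' * ((A.choose B : ℝ) * ((A:ℝ) - B)) := by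
              ring
          _ = (((B:ℝ)+1)/A)^(p+1) * (((A:ℝ) - 1 - B)/A)^m' * ((A.choose (B+1) : ℝ) * ((B:ℝ)+1)) := by
              rw [← hch]
          _ = (((B:ℝ)+1)/A)^(p+1) * (((A:ℝ) - 1 - B)/A)^m' * (A.choose (B+1) : ℝ) * ((B:ℝ)+1) := by
              ring
      have h7 : (C.choose x : ℝ) * ((B:ℝ)+1)
          ≤ (((B:ℝ)+1)/A)^(p+1) * (((A:ℝ) - 1 - B)/A)^m' * (A.choose (B+1) : ℝ) * ((B:ℝ)+1) :=
        le_trans (mul_le_mul_of_nonneg_right hK hb1pos.le) h5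
      exact le_of_mul_le_mul_right h7 hb1pos
end

section
/- Let L, f, T be real numbers with 0 < f ≤ T and T < L, let s be a real number with T − f ≤ s and s + f + (T − f) ≤ L, so the target fragment is the interval [s, s+f] ⊆ [0, L], and let U be a natural number. Draw U cut points independently and uniformly at random from [0, L]. Then the probability of the event {no cut lies in [s, s+f]} ∩ ({no cut lies in [s−(T−f), s]} ∪ {no cut lies in [s+f, s+f+(T−f)]}) equals 2·((L−T)/L)^U − ((L−2T+f)/L)^U. In particular, writing t₁ = (L−T)/(L−f), t₂ = (L−2T+f)/(L−f), t₃ = 1 − f/L, the probability that the fragment is intact and lies in an uncut piece of length at least T is at least 2·(t₁t₃)^U − (t₂t₃)^U. -/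
open MeasureTheory ProbabilityTheory

lemma cond_compl_Icc {L a b : ℝ} (hL : 0 < L) (ha : 0 ≤ a) (hab : a ≤ b) (hb : b ≤ L) :
    (volume : Measure ℝ)[|Set.Icc 0 L] (Set.Icc a b)ᶜ =
      ENNReal.ofReal ((L - (b - a)) / L) := by
  rw [ProbabilityTheory.cond_apply measurableSet_Icc]
  have h1 : Set.Icc 0 L ∩ (Set.Icc a b)ᶜ = Set.Icc 0 L \ Set.Icc a b := rfl
  rw [h1, measure_diff (Set.Icc_subset_Icc (by linarith) hb)
    measurableSet_Icc.nullMeasurableSet (by simp [Real.volume_Icc]),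
    Real.volume_Icc, Real.volume_Icc,
    ← ENNReal.ofReal_sub _ (by linarith), ENNReal.ofReal_div_of_pos hL,
    div_eq_mul_inv, mul_comm]
  ring_nf

lemma pi_avoid {L : ℝ} (hL : 0 < L) (U : ℕ) (A : Set ℝ) :
    Measure.pi (fun _ : Fin U => (volume : Measure ℝ)[|Set.Icc 0 L])
      {ω | ∀ i, ω i ∉ A} = ((volume : Measure ℝ)[|Set.Icc 0 L] Aᶜ) ^ U := by
  have hprob : IsProbabilityMeasure ((volume : Measure ℝ)[|Set.Icc 0 L]) :=
    cond_isProbabilityMeasure_of_finite (by simp [Real.volume_Icc, hL])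
      (by simp [Real.volume_Icc])
  have h1 : {ω : Fin U → ℝ | ∀ i, ω i ∉ A} = Set.pi Set.univ (fun _ => Aᶜ) := by
    ext ω; simp
  rw [h1, Measure.pi_pi]
  simp [Finset.prod_const]

/-- Draw `U` cut points independently and uniformly at random from `[0, L]`.
The probability that no cut lies in the target fragment `[s, s+f]` and no cut lies
within distance `T − f` on at least one side of it equals
`2((L−T)/L)^U − ((L−2T+f)/L)^U`.  In particular, with `t₁ = (L−T)/(L−f)`,
`t₂ = (L−2T+f)/(L−f)`, `t₃ = 1 − f/L`, the probability that the fragment is intact and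
lies in an uncut piece of length at least `T` is at least `2(t₁t₃)^U − (t₂t₃)^U`. -/
theorem stmt_16 (L f T s : ℝ) (hf : 0 < f) (hfT : f ≤ T) (hTL : T < L)
    (hs : T - f ≤ s) (hsf : s + f + (T - f) ≤ L) (U : ℕ) :
    Measure.pi (fun _ : Fin U => (volume : Measure ℝ)[|Set.Icc 0 L])
        {ω | (∀ i, ω i ∉ Set.Icc s (s + f)) ∧
          ((∀ i, ω i ∉ Set.Icc (s - (T - f)) s) ∨
            (∀ i, ω i ∉ Set.Icc (s + f) (s + f + (T - f))))} =
      ENNReal.ofReal (2 * ((L - T) / L) ^ U - ((L - 2 * T + f) / L) ^ U) ∧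
    ENNReal.ofReal (2 * ((L - T) / (L - f) * (1 - f / L)) ^ U -
        ((L - 2 * T + f) / (L - f) * (1 - f / L)) ^ U) ≤
      Measure.pi (fun _ : Fin U => (volume : Measure ℝ)[|Set.Icc 0 L])
        {ω | ∃ u v : ℝ, 0 ≤ u ∧ v ≤ L ∧ T ≤ v - u ∧ u ≤ s ∧ s + f ≤ v ∧
          ∀ i, ω i ∉ Set.Ioo u v} := by
  have hT : 0 < T := lt_of_lt_of_le hf hfT
  have hL : 0 < L := lt_trans hT hTL
  have hfL : f < L := lt_of_le_of_lt hfT hTL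
  set ν := Measure.pi (fun _ : Fin U => (volume : Measure ℝ)[|Set.Icc 0 L]) with hν
  set X := {ω : Fin U → ℝ | ∀ i, ω i ∉ Set.Icc (s - (T - f)) (s + f)} with hX
  set Y := {ω : Fin U → ℝ | ∀ i, ω i ∉ Set.Icc s (s + f + (T - f))} with hY
  set Z := {ω : Fin U → ℝ | ∀ i, ω i ∉ Set.Icc (s - (T - f)) (s + f + (T - f))} with hZ
  -- numeric values
  have han : 0 ≤ (L - T) / L := div_nonneg (by linarith) hL.le
  have hbn : 0 ≤ (L - 2 * T + f) / L := div_nonneg (by linarith) hL.le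
  have hXv : ν X = ENNReal.ofReal (((L - T) / L) ^ U) := by
    rw [hX, hν, pi_avoid hL U _,
      cond_compl_Icc hL (by linarith) (by linarith) (by linarith),
      show L - (s + f - (s - (T - f))) = L - T by ring, ← ENNReal.ofReal_pow han]
  have hYv : ν Y = ENNReal.ofReal (((L - T) / L) ^ U) := by
    rw [hY, hν, pi_avoid hL U _,
      cond_compl_Icc hL (by linarith) (by linarith) (by linarith),
      show L - (s + f + (T - f) - s) = L - T by ring, ← ENNReal.ofReal_pow han]
  have hZv : ν Z = ENNReal.ofReal (((L - 2 * T + f) / L) ^ U) := by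
    rw [hZ, hν, pi_avoid hL U _,
      cond_compl_Icc hL (by linarith) (by linarith) (by linarith),
      show L - (s + f + (T - f) - (s - (T - f))) = L - 2 * T + f by ring,
      ← ENNReal.ofReal_pow hbn]
  have hE : {ω : Fin U → ℝ | (∀ i, ω i ∉ Set.Icc s (s + f)) ∧
      ((∀ i, ω i ∉ Set.Icc (s - (T - f)) s) ∨
        (∀ i, ω i ∉ Set.Icc (s + f) (s + f + (T - f))))} = X ∪ Y := by
    ext ω
    simp only [Set.mem_setOf_eq, Set.mem_union, hX, hY]
    constructor
    · rintro ⟨h1, h2 | h3⟩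
      · left; intro i
        rw [← Set.Icc_union_Icc_eq_Icc (show s - (T - f) ≤ s by linarith)
          (show s ≤ s + f by linarith)]
        simp only [Set.mem_union, not_or]
        exact ⟨h2 i, h1 i⟩
      · right; intro i
        rw [← Set.Icc_union_Icc_eq_Icc (show s ≤ s + f by linarith)
          (show s + f ≤ s + f + (T - f) by linarith)]
        simp only [Set.mem_union, not_or]
        exact ⟨h1 i, h3 i⟩
    · rintro (h | h)
      · exact ⟨fun i hm => h i (Set.Icc_subset_Icc (by linarith) le_rfl hm),
          Or.inl fun i hm => h i (Set.Icc_subset_Icc le_rfl (by linarith) hm)⟩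
      · exact ⟨fun i hm => h i (Set.Icc_subset_Icc le_rfl (by linarith) hm),
          Or.inr fun i hm => h i (Set.Icc_subset_Icc (by linarith) le_rfl hm)⟩
  have hXY : X ∩ Y = Z := by
    ext ω
    simp only [Set.mem_inter_iff, Set.mem_setOf_eq, hX, hY, hZ]
    constructor
    · rintro ⟨h1, h2⟩ i
      rw [← Set.Icc_union_Icc_eq_Icc (show s - (T - f) ≤ s + f by linarith)
        (show s + f ≤ s + f + (T - f) by linarith)]
      simp only [Set.mem_union, not_or]
      exact ⟨h1 i, fun hm => h2 i (Set.Icc_subset_Icc (by linarith) le_rfl hm)⟩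
    · intro h
      exact ⟨fun i hm => h i (Set.Icc_subset_Icc le_rfl (by linarith) hm),
        fun i hm => h i (Set.Icc_subset_Icc (by linarith) le_rfl hm)⟩
  have hYmeas : MeasurableSet Y := by
    have : Y = Set.pi Set.univ (fun _ : Fin U => (Set.Icc s (s + f + (T - f)))ᶜ) := by
      ext ω; simp [hY]
    rw [this]; exact MeasurableSet.univ_pi fun i => measurableSet_Icc.compl
  have hkey : ν (X ∪ Y) =
      ENNReal.ofReal (2 * ((L - T) / L) ^ U - ((L - 2 * T + f) / L) ^ U) := by
    have h := measure_union_add_inter (μ := ν) X hYmeas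
    rw [hXY, hXv, hYv, hZv] at h
    have h2 : ν (X ∪ Y) + ENNReal.ofReal (((L - 2 * T + f) / L) ^ U) =
        ENNReal.ofReal (2 * ((L - T) / L) ^ U) := by
      rw [h, ← ENNReal.ofReal_add (pow_nonneg han U) (pow_nonneg han U)]
      congr 1; ring
    rw [ENNReal.eq_sub_of_add_eq ENNReal.ofReal_ne_top h2,
      ← ENNReal.ofReal_sub _ (pow_nonneg hbn U)]
  constructor
  · rw [hE]; exact hkey
  · have h1 : L - f ≠ 0 := by linarith
    have h2 : L ≠ 0 := by linarith
    have e0 : 1 - f / L = (L - f) / L := by field_simp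
    have e1 : (L - T) / (L - f) * (1 - f / L) = (L - T) / L := by
      rw [e0, div_mul_div_comm, mul_comm (L - f) L, mul_div_mul_right _ _ h1]
    have e2 : (L - 2 * T + f) / (L - f) * (1 - f / L) = (L - 2 * T + f) / L := by
      rw [e0, div_mul_div_comm, mul_comm (L - f) L, mul_div_mul_right _ _ h1]
    rw [e1, e2, ← hkey]
    apply measure_mono
    rintro ω (h | h)
    · exact ⟨s - (T - f), s + f, by linarith, by linarith, by linarith, by linarith,
        by linarith, fun i hm => h i (Set.Ioo_subset_Icc_self hm)⟩
    · exact ⟨s, s + f + (T - f), by linarith, by linarith, by linarith, le_rfl,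
        by linarith, fun i hm => h i (Set.Ioo_subset_Icc_self hm)⟩
end
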